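/- arXiv:2103.07947 — 5 statements merged into one kernel-verified Lean document; each statement's English description precedes it below -/
import Mathlib

section
/- Let f : U → ℝ be a convex function on an open interval U ⊆ ℝ, and let a₁ ≥ a₂ ≥ … ≥ aₙ and b₁ ≥ b₂ ≥ … ≥ bₙ be elements of U such that a₁ + … + aᵢ ≥ b₁ + … + bᵢ for every i ∈ {1, …, n}, with equality for i = n. Then f(a₁) + f(a₂) + … + f(aₙ) ≥ f(b₁) + f(b₂) + … + f(bₙ). -/
open Set Finset

private lemma exists_gt_mem' {U : Set ℝ} (hU : IsOpen U) {x : ℝ} (hx : x ∈ U) :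
    ∃ y ∈ U, x < y := by
  rcases Metric.isOpen_iff.1 hU x hx with ⟨ε, hε, hball⟩
  refine ⟨x + ε / 2, hball ?_, by linarith⟩
  simp only [Metric.mem_ball, Real.dist_eq]
  rw [abs_of_nonneg (by linarith)]
  linarith

private lemma exists_lt_mem' {U : Set ℝ} (hU : IsOpen U) {x : ℝ} (hx : x ∈ U) :
    ∃ w ∈ U, w < x := by
  rcases Metric.isOpen_iff.1 hU x hx with ⟨ε, hε, hball⟩
  refine ⟨x - ε / 2, hball ?_, by linarith⟩
  simp only [Metric.mem_ball, Real.dist_eq]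
  rw [abs_of_nonpos (by linarith)]
  linarith

/-- The right derivative-like subgradient. -/
private noncomputable def sg (f : ℝ → ℝ) (U : Set ℝ) (x : ℝ) : ℝ :=
  sInf ((fun y => (f y - f x) / (y - x)) '' (U ∩ Set.Ioi x))

private lemma sg_bddBelow {U : Set ℝ} (hU : IsOpen U) (hf : ConvexOn ℝ U f)
    {x : ℝ} (hx : x ∈ U) :
    BddBelow ((fun y => (f y - f x) / (y - x)) '' (U ∩ Set.Ioi x)) := by
  rcases exists_lt_mem' hU hx with ⟨w, hwU, hwx⟩
  refine ⟨(f w - f x) / (w - x), ?_⟩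
  rintro s ⟨y, ⟨hyU, hyx⟩, rfl⟩
  exact hf.secant_mono hx hwU hyU (by linarith : w ≠ x) (by rw [Set.mem_Ioi] at hyx; exact ne_of_gt hyx)
    (by rw [Set.mem_Ioi] at hyx; linarith)

private lemma sg_subgradient {U : Set ℝ} (hU : IsOpen U) {f : ℝ → ℝ}
    (hf : ConvexOn ℝ U f) {x z : ℝ} (hx : x ∈ U) (hz : z ∈ U) :
    sg f U x * (z - x) ≤ f z - f x := by
  rcases lt_trichotomy x z with hlt | rfl | hgt
  · have h1 : sg f U x ≤ (f z - f x) / (z - x) :=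
      csInf_le (sg_bddBelow hU hf hx) ⟨z, ⟨hz, hlt⟩, rfl⟩
    calc sg f U x * (z - x) ≤ (f z - f x) / (z - x) * (z - x) := by
          apply mul_le_mul_of_nonneg_right h1 (by linarith)
      _ = f z - f x := div_mul_cancel₀ _ (by linarith)
  · simp
  · have h1 : (f z - f x) / (z - x) ≤ sg f U x := by
      apply le_csInf
      · rcases exists_gt_mem' hU hx with ⟨y, hyU, hxy⟩
        exact ⟨_, ⟨y, ⟨hyU, hxy⟩, rfl⟩⟩
      · rintro s ⟨y, ⟨hyU, hyx⟩, rfl⟩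
        rw [Set.mem_Ioi] at hyx
        exact hf.secant_mono hx hz hyU (ne_of_lt hgt) (ne_of_gt hyx) (by linarith)
    calc sg f U x * (z - x) ≤ (f z - f x) / (z - x) * (z - x) := by
          rw [mul_comm, mul_comm ((f z - f x) / (z - x))]
          exact mul_le_mul_of_nonpos_left h1 (by linarith)
      _ = f z - f x := div_mul_cancel₀ _ (by linarith)

private lemma sg_mono {U : Set ℝ} (hU : IsOpen U) {f : ℝ → ℝ}
    (hf : ConvexOn ℝ U f) {x x' : ℝ} (hx : x ∈ U) (hx' : x' ∈ U) (hxx : x ≤ x') :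
    sg f U x ≤ sg f U x' := by
  rcases eq_or_lt_of_le hxx with rfl | hlt
  · exact le_refl _
  apply le_csInf
  · rcases exists_gt_mem' hU hx' with ⟨y, hyU, hxy⟩
    exact ⟨_, ⟨y, ⟨hyU, hxy⟩, rfl⟩⟩
  · rintro s ⟨y, ⟨hyU, hyx⟩, rfl⟩
    rw [Set.mem_Ioi] at hyx
    have h1 : sg f U x ≤ (f x' - f x) / (x' - x) :=
      csInf_le (sg_bddBelow hU hf hx) ⟨x', ⟨hx', hlt⟩, rfl⟩
    have h2 : (f x' - f x) / (x' - x) ≤ (f y - f x') / (y - x') :=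
      hf.slope_mono_adjacent hx hyU hlt hyx
    linarith

private lemma sum_Iic_fin {n : ℕ} (v : Fin n → ℝ) (v' : ℕ → ℝ)
    (hv : ∀ (j : ℕ) (hj : j < n), v' j = v ⟨j, hj⟩) (k : Fin n) :
    ∑ j ∈ Finset.range (k.1 + 1), v' j = ∑ i ∈ Finset.Iic k, v i := by
  refine Finset.sum_bij' (fun j hj => (⟨j, ?_⟩ : Fin n)) (fun i _ => i.1) ?_ ?_ ?_ ?_ ?_
  · exact lt_of_le_of_lt (Nat.lt_succ_iff.1 (Finset.mem_range.1 hj)) k.2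
  · intro j hj
    simp only [Finset.mem_Iic, Fin.le_def]
    exact Nat.lt_succ_iff.1 (Finset.mem_range.1 hj)
  · intro i hi
    simp only [Finset.mem_range, Nat.lt_succ_iff]
    exact Fin.le_def.1 (Finset.mem_Iic.1 hi)
  · intro j hj; rfl
  · intro i hi; rfl
  · intro j hj
    exact hv j _

/-- Karamata's (majorization) inequality on an open interval of `ℝ`. -/
theorem stmt_6 {n : ℕ} (U : Set ℝ) (hUopen : IsOpen U) (hUconv : Convex ℝ U)
    (f : ℝ → ℝ) (hf : ConvexOn ℝ U f)
    (a b : Fin n → ℝ) (ha : ∀ i, a i ∈ U) (hb : ∀ i, b i ∈ U)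
    (haDec : ∀ i j : Fin n, i ≤ j → a j ≤ a i)
    (hbDec : ∀ i j : Fin n, i ≤ j → b j ≤ b i)
    (hmaj : ∀ k : Fin n, ∑ i ∈ Finset.Iic k, b i ≤ ∑ i ∈ Finset.Iic k, a i)
    (htot : ∑ i, a i = ∑ i, b i) :
    ∑ i, f (b i) ≤ ∑ i, f (a i) := by
  classical
  set a' : ℕ → ℝ := fun j => if h : j < n then a ⟨j, h⟩ else 0 with ha'def
  set b' : ℕ → ℝ := fun j => if h : j < n then b ⟨j, h⟩ else 0 with hb'def
  have ha'eq : ∀ (j : ℕ) (hj : j < n), a' j = a ⟨j, hj⟩ := fun j hj => dif_pos hj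
  have hb'eq : ∀ (j : ℕ) (hj : j < n), b' j = b ⟨j, hj⟩ := fun j hj => dif_pos hj
  set d : ℕ → ℝ := fun j => a' j - b' j with hddef
  set c : ℕ → ℝ := fun j => sg f U (b' j) with hcdef
  have hTnonneg : ∀ k < n, 0 ≤ ∑ j ∈ Finset.range (k + 1), d j := by
    intro k hk
    have hm := hmaj ⟨k, hk⟩
    have h1 := sum_Iic_fin a a' ha'eq ⟨k, hk⟩
    have h2 := sum_Iic_fin b b' hb'eq ⟨k, hk⟩
    simp only [hddef, Finset.sum_sub_distrib]
    rw [show ((⟨k, hk⟩ : Fin n).1 = k) from rfl] at h1 h2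
    rw [h1, h2]
    linarith
  have hsum_a : ∑ j ∈ Finset.range n, a' j = ∑ i, a i := by
    rw [← Fin.sum_univ_eq_sum_range]
    exact Finset.sum_congr rfl fun i _ => by rw [ha'eq i.1 i.2]
  have hsum_b : ∑ j ∈ Finset.range n, b' j = ∑ i, b i := by
    rw [← Fin.sum_univ_eq_sum_range]
    exact Finset.sum_congr rfl fun i _ => by rw [hb'eq i.1 i.2]
  have hTn : ∑ j ∈ Finset.range n, d j = 0 := by
    simp only [hddef, Finset.sum_sub_distrib, hsum_a, hsum_b, htot, sub_self]
  have hcanti : ∀ i j : ℕ, i ≤ j → j < n → c j ≤ c i := by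
    intro i j hij hj
    have hi : i < n := lt_of_le_of_lt hij hj
    apply sg_mono hUopen hf
    · rw [hb'eq j hj]; exact hb _
    · rw [hb'eq i hi]; exact hb _
    · rw [hb'eq j hj, hb'eq i hi]
      exact hbDec ⟨i, hi⟩ ⟨j, hj⟩ hij
  have key : 0 ≤ ∑ j ∈ Finset.range n, c j * d j := by
    have habel := Finset.sum_range_by_parts c d n
    simp only [smul_eq_mul] at habel
    rw [habel, hTn, mul_zero, zero_sub]
    rw [neg_nonneg]
    apply Finset.sum_nonpos
    intro i hi
    have hi' : i + 1 < n := by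
      have := Finset.mem_range.1 hi; omega
    have h1 : c (i + 1) - c i ≤ 0 :=
      sub_nonpos.2 (hcanti i (i + 1) (Nat.le_succ i) hi')
    exact mul_nonpos_of_nonpos_of_nonneg h1 (hTnonneg i (by omega))
  have hstep : ∑ j ∈ Finset.range n, c j * d j ≤
      ∑ j ∈ Finset.range n, (f (a' j) - f (b' j)) := by
    apply Finset.sum_le_sum
    intro j hj
    have hj' := Finset.mem_range.1 hj
    have := sg_subgradient hUopen hf
      (show b' j ∈ U by rw [hb'eq j hj']; exact hb _)
      (show a' j ∈ U by rw [ha'eq j hj']; exact ha _)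
    simpa [hcdef, hddef] using this
  have hfa : ∑ j ∈ Finset.range n, f (a' j) = ∑ i, f (a i) := by
    rw [← Fin.sum_univ_eq_sum_range]
    exact Finset.sum_congr rfl fun i _ => by rw [ha'eq i.1 i.2]
  have hfb : ∑ j ∈ Finset.range n, f (b' j) = ∑ i, f (b i) := by
    rw [← Fin.sum_univ_eq_sum_range]
    exact Finset.sum_congr rfl fun i _ => by rw [hb'eq i.1 i.2]
  have : 0 ≤ ∑ j ∈ Finset.range n, (f (a' j) - f (b' j)) := le_trans key hstep
  rw [Finset.sum_sub_distrib, hfa, hfb] at this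
  linarith
end

section
/- Let T be a tree on n ≥ 7 vertices with maximum degree Δ, where ⌊(n−1)/2⌋ < Δ ≤ n − 2. Then SO(T) ≥ (n − Δ − 1)·√(Δ² + 4) + (2Δ − n + 1)·√(Δ² + 1) + √5·(n − Δ − 1), with equality if and only if T ≅ T_{n,Δ}, the tree obtained by attaching a pendant edge to each of n − Δ − 1 non-central vertices of the star S_Δ. -/
set_option linter.unusedSectionVars false
set_option linter.unusedVariables false

open scoped Classical

/-- The degree of a vertex `u` in a simple graph `G` on a finite vertex set. -/
noncomputable def deg {V : Type*} [Fintype V] (G : SimpleGraph V) (u : V) : ℕ :=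
  (Finset.univ.filter (fun v => G.Adj u v)).card

/-- The maximum degree of `G`. -/
noncomputable def maxDeg {V : Type*} [Fintype V] (G : SimpleGraph V) : ℕ :=
  Finset.univ.sup (deg G)

/-- The Sombor index `SO(G) = ∑_{uv ∈ E(G)} √(d(u)² + d(v)²)`:
each unordered edge is counted once (hence the factor `1/2`). -/
noncomputable def somborIndex {V : Type*} [Fintype V] (G : SimpleGraph V) : ℝ :=
  (1 / 2) * ∑ u : V, ∑ v : V,
    if G.Adj u v then Real.sqrt ((deg G u : ℝ) ^ 2 + (deg G v : ℝ) ^ 2) else 0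

/-- A graph is unicyclic iff it is connected and has as many edges as vertices
(the edge number is expressed via the handshake identity). -/
def IsUnicyclic {V : Type*} [Fintype V] (G : SimpleGraph V) : Prop :=
  G.Connected ∧ (∑ u : V, deg G u) = 2 * Fintype.card V

namespace StmtAux15

/-! ### Real-analytic lemmas -/

lemma le_of_sq {x y : ℝ} (hx : 0 ≤ x) (hy : 0 ≤ y) (h : x^2 ≤ y^2) : x ≤ y := by
  have := Real.sqrt_le_sqrt h
  rwa [Real.sqrt_sq hx, Real.sqrt_sq hy] at this

lemma lt_of_sq {x y : ℝ} (hx : 0 ≤ x) (hy : 0 ≤ y) (h : x^2 < y^2) : x < y := by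
  have := Real.sqrt_lt_sqrt (sq_nonneg x) h
  rwa [Real.sqrt_sq hx, Real.sqrt_sq hy] at this

lemma R1 {D d : ℝ} (hD : 2 ≤ D) (hd : 2 ≤ d) :
    Real.sqrt (D^2+1) + (d-1) * (Real.sqrt (D^2+4) - Real.sqrt (D^2+1))
      ≤ Real.sqrt (D^2+d^2) := by
  have hA2 : (Real.sqrt (D^2+1))^2 = D^2+1 := Real.sq_sqrt (by positivity)
  have hB2 : (Real.sqrt (D^2+4))^2 = D^2+4 := Real.sq_sqrt (by positivity)
  have hF2 : (Real.sqrt (D^2+d^2))^2 = D^2+d^2 := Real.sq_sqrt (by positivity)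
  set A := Real.sqrt (D^2+1) with hA
  set B := Real.sqrt (D^2+4) with hB
  set F := Real.sqrt (D^2+d^2) with hF
  have hA0 : 0 ≤ A := Real.sqrt_nonneg _
  have hB0 : 0 ≤ B := Real.sqrt_nonneg _
  have hF0 : 0 ≤ F := Real.sqrt_nonneg _
  have hCS : D^2 + d ≤ F * A := by
    apply le_of_sq (by positivity) (mul_nonneg hF0 hA0)
    have e : (F*A)^2 = (D^2+d^2)*(D^2+1) := by rw [mul_pow, hF2, hA2]
    rw [e]; nlinarith [sq_nonneg (D*(d-1))]
  have e2 : (F + (d-2)*A)^2 - ((d-1)*B)^2 = 2*(d-2)*(F*A - (D^2+d)) := by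
    calc (F + (d-2)*A)^2 - ((d-1)*B)^2
        = F^2 + 2*(d-2)*(F*A) + (d-2)^2*A^2 - (d-1)^2*B^2 := by ring
      _ = (D^2+d^2) + 2*(d-2)*(F*A) + (d-2)^2*(D^2+1) - (d-1)^2*(D^2+4) := by
          rw [hF2, hA2, hB2]
      _ = 2*(d-2)*(F*A - (D^2+d)) := by ring
  have h3 : 0 ≤ 2*(d-2)*(F*A - (D^2+d)) :=
    mul_nonneg (by linarith) (by linarith)
  have key : ((d-1)*B)^2 ≤ (F + (d-2)*A)^2 := by linarith
  have key' : (d-1)*B ≤ F + (d-2)*A :=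
    le_of_sq (mul_nonneg (by linarith) hB0)
      (add_nonneg hF0 (mul_nonneg (by linarith) hA0)) key
  have e3 : A + (d-1)*(B-A) = (d-1)*B - (d-2)*A := by ring
  linarith

lemma R1s {D d : ℝ} (hD : 2 ≤ D) (hd : 3 ≤ d) :
    Real.sqrt (D^2+1) + (d-1) * (Real.sqrt (D^2+4) - Real.sqrt (D^2+1))
      < Real.sqrt (D^2+d^2) := by
  have hA2 : (Real.sqrt (D^2+1))^2 = D^2+1 := Real.sq_sqrt (by positivity)
  have hB2 : (Real.sqrt (D^2+4))^2 = D^2+4 := Real.sq_sqrt (by positivity)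
  have hF2 : (Real.sqrt (D^2+d^2))^2 = D^2+d^2 := Real.sq_sqrt (by positivity)
  set A := Real.sqrt (D^2+1) with hA
  set B := Real.sqrt (D^2+4) with hB
  set F := Real.sqrt (D^2+d^2) with hF
  have hA0 : 0 ≤ A := Real.sqrt_nonneg _
  have hB0 : 0 ≤ B := Real.sqrt_nonneg _
  have hF0 : 0 ≤ F := Real.sqrt_nonneg _
  have hCS : D^2 + d < F * A := by
    apply lt_of_sq (by positivity) (mul_nonneg hF0 hA0)
    have e : (F*A)^2 = (D^2+d^2)*(D^2+1) := by rw [mul_pow, hF2, hA2]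
    rw [e]; nlinarith [sq_nonneg (D*(d-1)), sq_nonneg (D-2), sq_nonneg (d-3)]
  have e2 : (F + (d-2)*A)^2 - ((d-1)*B)^2 = 2*(d-2)*(F*A - (D^2+d)) := by
    calc (F + (d-2)*A)^2 - ((d-1)*B)^2
        = F^2 + 2*(d-2)*(F*A) + (d-2)^2*A^2 - (d-1)^2*B^2 := by ring
      _ = (D^2+d^2) + 2*(d-2)*(F*A) + (d-2)^2*(D^2+1) - (d-1)^2*(D^2+4) := by
          rw [hF2, hA2, hB2]
      _ = 2*(d-2)*(F*A - (D^2+d)) := by ring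
  have h3 : 0 < 2*(d-2)*(F*A - (D^2+d)) :=
    mul_pos (by linarith) (by linarith)
  have key : ((d-1)*B)^2 < (F + (d-2)*A)^2 := by linarith
  have key' : (d-1)*B < F + (d-2)*A :=
    lt_of_sq (mul_nonneg (by linarith) hB0)
      (add_nonneg hF0 (mul_nonneg (by linarith) hA0)) key
  have e3 : A + (d-1)*(B-A) = (d-1)*B - (d-2)*A := by ring
  linarith

lemma gap_le {D : ℝ} (hD : 4 ≤ D) :
    Real.sqrt (D^2+4) - Real.sqrt (D^2+1) ≤ 3/8 := by
  have hA2 : (Real.sqrt (D^2+1))^2 = D^2+1 := Real.sq_sqrt (by positivity)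
  have hB2 : (Real.sqrt (D^2+4))^2 = D^2+4 := Real.sq_sqrt (by positivity)
  set A := Real.sqrt (D^2+1) with hA
  set B := Real.sqrt (D^2+4) with hB
  have hA0 : 0 ≤ A := Real.sqrt_nonneg _
  have hB0 : 0 ≤ B := Real.sqrt_nonneg _
  have hA4 : 4 ≤ A := by
    apply le_of_sq (by norm_num) hA0
    rw [hA2]; nlinarith
  have : B ≤ A + 3/8 := by
    apply le_of_sq hB0 (by linarith)
    rw [hB2]; nlinarith
  linarith

lemma sqrt5_le : Real.sqrt 5 ≤ 9/4 := by
  apply le_of_sq (Real.sqrt_nonneg _) (by norm_num)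
  rw [Real.sq_sqrt (by norm_num : (0:ℝ) ≤ 5)]; norm_num

lemma R2 {D p d : ℝ} (hD : 4 ≤ D) (hp : 2 ≤ p) (hd : 1 ≤ d) :
    Real.sqrt 5 + (d-1) * (Real.sqrt (D^2+4) - Real.sqrt (D^2+1))
      ≤ Real.sqrt (p^2+d^2) := by
  have h5 : (Real.sqrt 5)^2 = 5 := Real.sq_sqrt (by norm_num)
  have h50 : 0 ≤ Real.sqrt 5 := Real.sqrt_nonneg _
  have step1 : Real.sqrt 5 + (3/8)*(d-1) ≤ Real.sqrt (4+d^2) := by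
    apply le_of_sq (add_nonneg h50 (by linarith)) (Real.sqrt_nonneg _)
    rw [Real.sq_sqrt (by positivity : (0:ℝ) ≤ 4+d^2)]
    nlinarith [mul_le_mul_of_nonneg_left sqrt5_le (show (0:ℝ) ≤ 3/4*(d-1) by linarith),
      sq_nonneg (d-1), h5]
  have step0 : Real.sqrt (4+d^2) ≤ Real.sqrt (p^2+d^2) :=
    Real.sqrt_le_sqrt (by nlinarith)
  have hmul : (d-1) * (Real.sqrt (D^2+4) - Real.sqrt (D^2+1)) ≤ (d-1)*(3/8) :=
    mul_le_mul_of_nonneg_left (gap_le hD) (by linarith)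
  linarith

lemma R2sa {D p d : ℝ} (hD : 4 ≤ D) (hp : 2 ≤ p) (hd : 2 ≤ d) :
    Real.sqrt 5 + (d-1) * (Real.sqrt (D^2+4) - Real.sqrt (D^2+1))
      < Real.sqrt (p^2+d^2) := by
  have h5 : (Real.sqrt 5)^2 = 5 := Real.sq_sqrt (by norm_num)
  have h50 : 0 ≤ Real.sqrt 5 := Real.sqrt_nonneg _
  have step1 : Real.sqrt 5 + (3/8)*(d-1) < Real.sqrt (4+d^2) := by
    apply lt_of_sq (add_nonneg h50 (by linarith)) (Real.sqrt_nonneg _)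
    rw [Real.sq_sqrt (by positivity : (0:ℝ) ≤ 4+d^2)]
    nlinarith [mul_le_mul_of_nonneg_left sqrt5_le (show (0:ℝ) ≤ 3/4*(d-1) by linarith),
      sq_nonneg (d-1), h5]
  have step0 : Real.sqrt (4+d^2) ≤ Real.sqrt (p^2+d^2) :=
    Real.sqrt_le_sqrt (by nlinarith)
  have hmul : (d-1) * (Real.sqrt (D^2+4) - Real.sqrt (D^2+1)) ≤ (d-1)*(3/8) :=
    mul_le_mul_of_nonneg_left (gap_le hD) (by linarith)
  linarith

/-! ### Rooting a tree -/

open SimpleGraph Finset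

variable {V : Type*} [Fintype V] {T : SimpleGraph V}

noncomputable def pTo (hT : T.IsTree) (c v : V) : T.Walk v c :=
  (hT.existsUnique_path v c).exists.choose

lemma pTo_isPath (hT : T.IsTree) (c v : V) : (pTo hT c v).IsPath :=
  (hT.existsUnique_path v c).exists.choose_spec

lemma pTo_unique (hT : T.IsTree) {c v : V} (q : T.Walk v c) (hq : q.IsPath) :
    q = pTo hT c v :=
  (hT.existsUnique_path v c).unique hq (pTo_isPath hT c v)

lemma pTo_self (hT : T.IsTree) (c : V) : pTo hT c c = SimpleGraph.Walk.nil :=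
  SimpleGraph.Walk.isPath_iff_eq_nil.mp (pTo_isPath hT c c)

noncomputable def par (hT : T.IsTree) (c v : V) : V := (pTo hT c v).getVert 1

noncomputable def dep (hT : T.IsTree) (c v : V) : ℕ := (pTo hT c v).length

lemma dep_self (hT : T.IsTree) (c : V) : dep hT c c = 0 := by
  rw [dep, pTo_self]; rfl

lemma ne_c_of_eq_cons (hT : T.IsTree) {c v u : V} {h : T.Adj v u} {q : T.Walk u c}
    (he : pTo hT c v = SimpleGraph.Walk.cons h q) : v ≠ c := by
  rintro rfl
  rw [pTo_self] at he
  simp at he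

lemma length_pos (hT : T.IsTree) {c v : V} (hv : v ≠ c) : 0 < (pTo hT c v).length := by
  rw [← SimpleGraph.Walk.not_nil_iff_lt_length]
  exact fun h => hv h.eq

lemma exists_cons (hT : T.IsTree) {c v : V} (hv : v ≠ c) :
    ∃ h : T.Adj v (par hT c v),
      pTo hT c v = SimpleGraph.Walk.cons h (pTo hT c (par hT c v)) := by
  obtain ⟨u, h, q, hq⟩ := SimpleGraph.Walk.not_nil_iff.mp
    (by rw [SimpleGraph.Walk.not_nil_iff_lt_length]; exact length_pos hT hv)
  have hu : par hT c v = u := by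
    rw [par, hq, SimpleGraph.Walk.getVert_cons_succ, SimpleGraph.Walk.getVert_zero]
  subst hu
  have hq' : q.IsPath := by
    have hp := pTo_isPath hT c v
    rw [hq] at hp
    exact hp.of_cons
  rw [pTo_unique hT q hq'] at hq
  exact ⟨h, hq⟩

lemma adj_par (hT : T.IsTree) {c v : V} (hv : v ≠ c) : T.Adj v (par hT c v) :=
  (exists_cons hT hv).choose

lemma dep_par (hT : T.IsTree) {c v : V} (hv : v ≠ c) :
    dep hT c v = dep hT c (par hT c v) + 1 := by
  obtain ⟨h, he⟩ := exists_cons hT hv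
  rw [dep, he, SimpleGraph.Walk.length_cons, dep]

lemma dep_eq_zero_iff (hT : T.IsTree) {c v : V} : dep hT c v = 0 ↔ v = c := by
  constructor
  · intro h
    have : (pTo hT c v).Nil := SimpleGraph.Walk.nil_iff_length_eq.mpr h
    exact this.eq
  · rintro rfl; exact dep_self hT _

lemma adj_structure (hT : T.IsTree) (c : V) {u v : V} (h : T.Adj u v) :
    (u ≠ c ∧ par hT c u = v) ∨ (v ≠ c ∧ par hT c v = u) := by
  by_cases hmem : u ∈ (pTo hT c v).support
  · right
    have hp : (pTo hT c v).IsPath := pTo_isPath hT c v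
    have htake : ((pTo hT c v).takeUntil u hmem).IsPath := hp.takeUntil hmem
    have hsingle : (SimpleGraph.Walk.cons h.symm (SimpleGraph.Walk.nil) : T.Walk v u).IsPath := by
      simp [SimpleGraph.Walk.cons_isPath_iff, h.symm.ne]
    have hts : (pTo hT c v).takeUntil u hmem
        = SimpleGraph.Walk.cons h.symm SimpleGraph.Walk.nil :=
      (hT.existsUnique_path v u).unique htake hsingle
    have hspec := (pTo hT c v).take_spec hmem
    rw [hts] at hspec
    have hdrop : ((pTo hT c v).dropUntil u hmem).IsPath := hp.dropUntil hmem
    rw [pTo_unique hT _ hdrop] at hspec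
    have he : pTo hT c v = SimpleGraph.Walk.cons h.symm (pTo hT c u) := by
      rw [← hspec]; simp [SimpleGraph.Walk.cons_append]
    refine ⟨ne_c_of_eq_cons hT he, ?_⟩
    rw [par, he, SimpleGraph.Walk.getVert_cons_succ, SimpleGraph.Walk.getVert_zero]
  · left
    have hcons : (SimpleGraph.Walk.cons h (pTo hT c v)).IsPath := by
      rw [SimpleGraph.Walk.cons_isPath_iff]
      exact ⟨pTo_isPath hT c v, hmem⟩
    have he : pTo hT c u = SimpleGraph.Walk.cons h (pTo hT c v) :=
      (pTo_unique hT _ hcons).symm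
    refine ⟨ne_c_of_eq_cons hT he, ?_⟩
    rw [par, he, SimpleGraph.Walk.getVert_cons_succ, SimpleGraph.Walk.getVert_zero]

lemma par_not_both (hT : T.IsTree) {c u v : V} (h1 : u ≠ c ∧ par hT c u = v)
    (h2 : v ≠ c ∧ par hT c v = u) : False := by
  have e1 := dep_par hT h1.1
  have e2 := dep_par hT h2.1
  rw [h1.2] at e1
  rw [h2.2] at e2
  omega

lemma adj_iff (hT : T.IsTree) (c : V) (u v : V) :
    T.Adj u v ↔ (u ≠ c ∧ par hT c u = v) ∨ (v ≠ c ∧ par hT c v = u) := by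
  constructor
  · exact adj_structure hT c
  · rintro (⟨hu, rfl⟩ | ⟨hv, rfl⟩)
    · exact adj_par hT hu
    · exact (adj_par hT hv).symm

lemma dep_eq_dist (hT : T.IsTree) (c v : V) : dep hT c v = T.dist v c := by
  refine le_antisymm ?_ (SimpleGraph.dist_le _)
  obtain ⟨w, hw⟩ := hT.isConnected.exists_walk_length_eq_dist v c
  have : w.bypass = pTo hT c v := pTo_unique hT _ w.bypass_isPath
  rw [dep, ← this, ← hw]
  exact SimpleGraph.Walk.length_bypass_le w

lemma dist_c_eq (hT : T.IsTree) (c v : V) : T.dist c v = dep hT c v := by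
  rw [SimpleGraph.dist_comm]
  exact (dep_eq_dist hT c v).symm

/-- children of `v` in the tree rooted at `c` -/
noncomputable def chl (hT : T.IsTree) (c v : V) : Finset V :=
  (Finset.univ.erase c).filter (fun u => par hT c u = v)

lemma mem_chl (hT : T.IsTree) {c v u : V} :
    u ∈ chl hT c v ↔ u ≠ c ∧ par hT c u = v := by
  simp [chl]

lemma deg_c_eq (hT : T.IsTree) (c : V) : deg T c = (chl hT c c).card := by
  rw [deg]
  congr 1
  ext u
  simp only [mem_filter, mem_univ, true_and, mem_chl hT]
  rw [adj_iff hT c c u]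
  simp

lemma deg_ne_eq (hT : T.IsTree) {c v : V} (hv : v ≠ c) :
    deg T v = (chl hT c v).card + 1 := by
  have hnot : par hT c v ∉ chl hT c v := by
    rw [mem_chl hT]
    rintro ⟨hpc, hpp⟩
    have e1 := dep_par hT hv
    have e2 := dep_par hT hpc
    rw [hpp] at e2
    omega
  rw [deg]
  have : Finset.univ.filter (fun u => T.Adj v u) = insert (par hT c v) (chl hT c v) := by
    ext u
    simp only [mem_filter, mem_univ, true_and, mem_insert, mem_chl hT]
    rw [adj_iff hT c v u]
    constructor
    · rintro (⟨_, h⟩ | h)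
      · exact Or.inl h.symm
      · exact Or.inr h
    · rintro (rfl | h)
      · exact Or.inl ⟨hv, rfl⟩
      · exact Or.inr h
  rw [this, Finset.card_insert_of_notMem hnot]

lemma deg_pos (hT : T.IsTree) {c v : V} (hv : v ≠ c) : 1 ≤ deg T v := by
  rw [deg_ne_eq hT hv]; omega

lemma deg_par_ge_two (hT : T.IsTree) {c v : V} (hv : v ≠ c) (hp : par hT c v ≠ c) :
    2 ≤ deg T (par hT c v) := by
  have hvmem : v ∈ chl hT c (par hT c v) := (mem_chl hT).mpr ⟨hv, rfl⟩
  have : 1 ≤ (chl hT c (par hT c v)).card := Finset.card_pos.mpr ⟨v, hvmem⟩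
  rw [deg_ne_eq hT hp]
  omega

lemma sum_chl_card (hT : T.IsTree) (c : V) :
    ∑ v : V, (chl hT c v).card = (Finset.univ.erase c).card :=
  (Finset.card_eq_sum_card_fiberwise
    (f := par hT c) (s := Finset.univ.erase c) (t := Finset.univ)
    (fun x _ => Finset.mem_univ _)).symm

/-! ### Sombor index over a rooted tree -/

lemma sombor_eq (hT : T.IsTree) (c : V) :
    somborIndex T = ∑ v ∈ Finset.univ.erase c,
      Real.sqrt ((deg T (par hT c v) : ℝ) ^ 2 + (deg T v : ℝ) ^ 2) := by
  set f : V → V → ℝ :=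
    fun u v => Real.sqrt ((deg T u : ℝ) ^ 2 + (deg T v : ℝ) ^ 2) with hf
  have fsymm : ∀ u v, f u v = f v u := by
    intro u v; simp only [hf]; rw [add_comm]
  have hsplit : ∀ u v : V, (if T.Adj u v then f u v else 0)
      = (if u ≠ c ∧ par hT c u = v then f u v else 0)
        + (if v ≠ c ∧ par hT c v = u then f u v else 0) := by
    intro u v
    by_cases h : T.Adj u v
    · rcases (adj_iff hT c u v).mp h with h1 | h2
      · rw [if_pos h, if_pos h1, if_neg (fun h2 => par_not_both hT h1 h2), add_zero]
      · rw [if_pos h, if_pos h2, if_neg (fun h1 => par_not_both hT h1 h2), zero_add]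
    · rw [if_neg h, if_neg, if_neg, add_zero]
      · exact fun h2 => h ((adj_iff hT c u v).mpr (Or.inr h2))
      · exact fun h1 => h ((adj_iff hT c u v).mpr (Or.inl h1))
  have hB : ∀ u : V, (∑ v : V, if u ≠ c ∧ par hT c u = v then f u v else 0)
      = (if u ≠ c then f u (par hT c u) else 0) := by
    intro u
    by_cases hu : u = c
    · simp [hu]
    · simp only [hu, ne_eq, not_false_eq_true, true_and, if_true]
      rw [Finset.sum_ite_eq Finset.univ (par hT c u) (fun v => f u v)]
      simp
  have hA : ∀ v : V, (∑ u : V, if v ≠ c ∧ par hT c v = u then f u v else 0)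
      = (if v ≠ c then f (par hT c v) v else 0) := by
    intro v
    by_cases hv : v = c
    · simp [hv]
    · simp only [hv, ne_eq, not_false_eq_true, true_and, if_true]
      rw [Finset.sum_ite_eq Finset.univ (par hT c v) (fun u => f u v)]
      simp
  have hdouble : (∑ u : V, ∑ v : V, if T.Adj u v then f u v else 0)
      = 2 * ∑ v ∈ Finset.univ.erase c, f (par hT c v) v := by
    calc (∑ u : V, ∑ v : V, if T.Adj u v then f u v else 0)
        = ∑ u : V, ((∑ v : V, if u ≠ c ∧ par hT c u = v then f u v else 0)
            + (∑ v : V, if v ≠ c ∧ par hT c v = u then f u v else 0)) := by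
          refine Finset.sum_congr rfl fun u _ => ?_
          rw [← Finset.sum_add_distrib]
          exact Finset.sum_congr rfl fun v _ => hsplit u v
      _ = (∑ u : V, ∑ v : V, if u ≠ c ∧ par hT c u = v then f u v else 0)
            + (∑ u : V, ∑ v : V, if v ≠ c ∧ par hT c v = u then f u v else 0) :=
          Finset.sum_add_distrib
      _ = (∑ u : V, if u ≠ c then f u (par hT c u) else 0)
            + (∑ v : V, if v ≠ c then f (par hT c v) v else 0) := by
          rw [Finset.sum_congr rfl fun u _ => hB u, Finset.sum_comm]
          rw [Finset.sum_congr rfl fun v _ => hA v]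
      _ = (∑ v : V, if v ≠ c then f (par hT c v) v else 0)
            + (∑ v : V, if v ≠ c then f (par hT c v) v else 0) := by
          congr 1
          exact Finset.sum_congr rfl fun u _ => by rw [fsymm]
      _ = 2 * ∑ v ∈ Finset.univ.erase c, f (par hT c v) v := by
          rw [← Finset.sum_filter, Finset.filter_ne']
          ring
  rw [somborIndex, hdouble]
  ring

/-! ### Pointwise bounds -/

noncomputable def fE (hT : T.IsTree) (c v : V) : ℝ :=
  Real.sqrt ((deg T (par hT c v) : ℝ) ^ 2 + (deg T v : ℝ) ^ 2)

noncomputable def bndE (hT : T.IsTree) (c : V) (Δ : ℕ) (v : V) : ℝ :=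
  (if par hT c v = c then Real.sqrt ((Δ:ℝ)^2+1) else Real.sqrt 5)
    + ((deg T v : ℝ) - 1) * (Real.sqrt ((Δ:ℝ)^2+4) - Real.sqrt ((Δ:ℝ)^2+1))

lemma bnd_le (hT : T.IsTree) {c : V} {Δ : ℕ} (hdegc : deg T c = Δ) (hΔ4 : 4 ≤ Δ)
    {v : V} (hv : v ≠ c) : bndE hT c Δ v ≤ fE hT c v := by
  have hD4 : (4:ℝ) ≤ (Δ:ℝ) := by exact_mod_cast hΔ4
  have hd1 : 1 ≤ deg T v := deg_pos hT hv
  unfold bndE fE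
  by_cases hpc : par hT c v = c
  · rw [if_pos hpc, hpc, hdegc]
    rcases Nat.lt_or_ge (deg T v) 2 with h | h
    · have h1 : deg T v = 1 := by omega
      rw [h1]
      norm_num
    · have h2 : (2:ℝ) ≤ (deg T v : ℝ) := by exact_mod_cast h
      exact R1 (by linarith) h2
  · rw [if_neg hpc]
    have hp2 : (2:ℝ) ≤ (deg T (par hT c v) : ℝ) := by
      exact_mod_cast deg_par_ge_two hT hv hpc
    exact R2 hD4 hp2 (by exact_mod_cast hd1)

lemma strict1 (hT : T.IsTree) {c : V} {Δ : ℕ} (hdegc : deg T c = Δ) (hΔ4 : 4 ≤ Δ)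
    {v : V} (hv : v ≠ c) (hpc : par hT c v = c) (h3 : 3 ≤ deg T v) :
    bndE hT c Δ v < fE hT c v := by
  have hD4 : (4:ℝ) ≤ (Δ:ℝ) := by exact_mod_cast hΔ4
  unfold bndE fE
  rw [if_pos hpc, hpc, hdegc]
  exact R1s (by linarith) (by exact_mod_cast h3)

lemma strict2 (hT : T.IsTree) {c : V} {Δ : ℕ} (hdegc : deg T c = Δ) (hΔ4 : 4 ≤ Δ)
    {v : V} (hv : v ≠ c) (hpc : par hT c v ≠ c) (h2 : 2 ≤ deg T v) :
    bndE hT c Δ v < fE hT c v := by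
  have hD4 : (4:ℝ) ≤ (Δ:ℝ) := by exact_mod_cast hΔ4
  unfold bndE fE
  rw [if_neg hpc]
  have hp2 : (2:ℝ) ≤ (deg T (par hT c v) : ℝ) := by
    exact_mod_cast deg_par_ge_two hT hv hpc
  exact R2sa hD4 hp2 (by exact_mod_cast h2)

lemma eq_case1 (hT : T.IsTree) {c : V} {Δ : ℕ} (hdegc : deg T c = Δ)
    {v : V} (hpc : par hT c v = c) (hd : deg T v = 1) :
    bndE hT c Δ v = fE hT c v := by
  unfold bndE fE
  rw [if_pos hpc, hpc, hdegc, hd]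
  norm_num

lemma eq_case2 (hT : T.IsTree) {c : V} {Δ : ℕ} (hdegc : deg T c = Δ)
    {v : V} (hpc : par hT c v = c) (hd : deg T v = 2) :
    bndE hT c Δ v = fE hT c v := by
  unfold bndE fE
  rw [if_pos hpc, hpc, hdegc, hd]
  norm_num

lemma eq_case3 (hT : T.IsTree) {c : V} {Δ : ℕ}
    {v : V} (hpc : par hT c v ≠ c) (hd : deg T v = 1) (hp2 : deg T (par hT c v) = 2) :
    bndE hT c Δ v = fE hT c v := by
  unfold bndE fE
  rw [if_neg hpc, hd, hp2]
  norm_num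

end StmtAux15
/-- Theorem 1.1(ii): minimum Sombor index of trees with `n ≥ 7` vertices and maximum
degree `Δ`, for `⌊(n-1)/2⌋ < Δ ≤ n - 2`; equality holds iff `T ≅ T_{n,Δ}`, i.e. `T`
has a center `c` of degree `Δ`, all other vertices of degree at most `2`, and every
vertex within distance `2` of `c`. -/
theorem stmt_15 {V : Type*} [Fintype V] (T : SimpleGraph V) (n Δ : ℕ)
    (hT : T.IsTree) (hn : Fintype.card V = n) (h7 : 7 ≤ n)
    (hmax : maxDeg T = Δ) (hΔ1 : (n - 1) / 2 < Δ) (hΔ2 : Δ ≤ n - 2) :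
    somborIndex T
      ≥ ((n : ℝ) - Δ - 1) * Real.sqrt ((Δ : ℝ) ^ 2 + 4)
        + (2 * (Δ : ℝ) - n + 1) * Real.sqrt ((Δ : ℝ) ^ 2 + 1)
        + Real.sqrt 5 * ((n : ℝ) - Δ - 1)
    ∧ (somborIndex T
        = ((n : ℝ) - Δ - 1) * Real.sqrt ((Δ : ℝ) ^ 2 + 4)
          + (2 * (Δ : ℝ) - n + 1) * Real.sqrt ((Δ : ℝ) ^ 2 + 1)
          + Real.sqrt 5 * ((n : ℝ) - Δ - 1)
      ↔ ∃ c, deg T c = Δ ∧ (∀ v, v ≠ c → deg T v ≤ 2)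
          ∧ ∀ v, T.dist c v ≤ 2) := by
  classical
  open StmtAux15 Finset in
  haveI hne : Nonempty V := by
    rw [← Fintype.card_pos_iff]; omega
  obtain ⟨c, -, hc⟩ := Finset.exists_mem_eq_sup (Finset.univ : Finset V)
    Finset.univ_nonempty (deg T)
  have hdegc : deg T c = Δ := by
    rw [← hmax]; exact hc.symm
  have hΔ4 : 4 ≤ Δ := by omega
  set m : ℕ := n - 1 - Δ with hmdef
  have hm1 : 1 ≤ m := by omega
  have hmn : m + Δ + 1 = n := by omega
  have hn2 : (n:ℝ) = (m:ℝ) + (Δ:ℝ) + 1 := by exact_mod_cast hmn.symm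
  have hSo : somborIndex T = ∑ v ∈ Finset.univ.erase c, fE hT c v := sombor_eq hT c
  have hcardS : (Finset.univ.erase c).card = n - 1 := by
    rw [Finset.card_erase_of_mem (Finset.mem_univ c), Finset.card_univ, hn]
  have hsum_k : ∑ v : V, (chl hT c v).card = n - 1 := by
    rw [sum_chl_card hT c, hcardS]
  have hkc : (chl hT c c).card = Δ := by rw [← deg_c_eq hT c, hdegc]
  have hsum_kS : ∑ v ∈ Finset.univ.erase c, (chl hT c v).card = m := by
    have h2 := Finset.sum_erase_add Finset.univ
      (fun v => (chl hT c v).card) (Finset.mem_univ c)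
    omega
  have hcard1 : ((Finset.univ.erase c).filter (fun v => par hT c v = c)).card = Δ := by
    have he : (Finset.univ.erase c).filter (fun v => par hT c v = c) = chl hT c c := rfl
    rw [he, hkc]
  have hcard2 : ((Finset.univ.erase c).filter (fun v => ¬ par hT c v = c)).card = m := by
    have h3 := Finset.card_filter_add_card_filter_not
      (s := Finset.univ.erase c) (p := fun v => par hT c v = c)
    omega
  have hsum_bnd : ∑ v ∈ Finset.univ.erase c, bndE hT c Δ v
      = (Δ:ℝ) * Real.sqrt ((Δ:ℝ)^2+1) + (m:ℝ) * Real.sqrt 5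
        + (m:ℝ) * (Real.sqrt ((Δ:ℝ)^2+4) - Real.sqrt ((Δ:ℝ)^2+1)) := by
    unfold bndE
    rw [Finset.sum_add_distrib]
    rw [Finset.sum_ite, Finset.sum_const, Finset.sum_const, hcard1, hcard2,
      nsmul_eq_mul, nsmul_eq_mul]
    have he : ∀ v ∈ Finset.univ.erase c,
        ((deg T v : ℝ) - 1) * (Real.sqrt ((Δ:ℝ)^2+4) - Real.sqrt ((Δ:ℝ)^2+1))
          = ((chl hT c v).card : ℝ)
              * (Real.sqrt ((Δ:ℝ)^2+4) - Real.sqrt ((Δ:ℝ)^2+1)) := by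
      intro v hv
      rw [deg_ne_eq hT (Finset.mem_erase.mp hv).1]
      push_cast; ring
    rw [Finset.sum_congr rfl he, ← Finset.sum_mul, ← Nat.cast_sum, hsum_kS]
  have htarget : ((n : ℝ) - Δ - 1) * Real.sqrt ((Δ : ℝ) ^ 2 + 4)
        + (2 * (Δ : ℝ) - n + 1) * Real.sqrt ((Δ : ℝ) ^ 2 + 1)
        + Real.sqrt 5 * ((n : ℝ) - Δ - 1)
      = ∑ v ∈ Finset.univ.erase c, bndE hT c Δ v := by
    rw [hsum_bnd, hn2]; ring
  have hpt : ∀ v ∈ Finset.univ.erase c, bndE hT c Δ v ≤ fE hT c v := by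
    intro v hv
    exact bnd_le hT hdegc hΔ4 (Finset.mem_erase.mp hv).1
  refine ⟨?_, ?_, ?_⟩
  · rw [ge_iff_le, htarget, hSo]
    exact Finset.sum_le_sum hpt
  · -- equality implies the structure
    intro hEq
    have hsum_eq : ∑ v ∈ Finset.univ.erase c, bndE hT c Δ v
        = ∑ v ∈ Finset.univ.erase c, fE hT c v := by
      rw [← htarget, ← hSo, hEq]
    have hterm := (Finset.sum_eq_sum_iff_of_le hpt).mp hsum_eq
    refine ⟨c, hdegc, ?_, ?_⟩
    · intro v hvne
      have hveq := hterm v (Finset.mem_erase.mpr ⟨hvne, Finset.mem_univ v⟩)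
      by_cases hpc : par hT c v = c
      · by_contra hdeg
        exact absurd hveq (ne_of_lt (strict1 hT hdegc hΔ4 hvne hpc (by omega)))
      · by_contra hdeg
        exact absurd hveq (ne_of_lt (strict2 hT hdegc hΔ4 hvne hpc (by omega)))
    · intro v
      by_cases hvc : v = c
      · subst hvc; simp [SimpleGraph.dist_self]
      rw [dist_c_eq hT c v]
      by_contra hdep
      push_neg at hdep
      have hdv : dep hT c v = dep hT c (par hT c v) + 1 := dep_par hT hvc
      have hdu : 2 ≤ dep hT c (par hT c v) := by omega
      have huc : par hT c v ≠ c := by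
        intro h
        rw [h, dep_self] at hdu
        omega
      have hpuc : par hT c (par hT c v) ≠ c := by
        intro h
        have := dep_par hT huc
        rw [h, dep_self] at this
        omega
      have hdu2 : 2 ≤ deg T (par hT c v) := deg_par_ge_two hT hvc huc
      have hueq := hterm (par hT c v)
        (Finset.mem_erase.mpr ⟨huc, Finset.mem_univ _⟩)
      exact absurd hueq (ne_of_lt (strict2 hT hdegc hΔ4 huc hpuc hdu2))
  · -- the structure implies equality
    rintro ⟨c', hc'1, hc'2, hc'3⟩
    have hcc : c' = c := by
      by_contra hne'
      have h1 := hc'2 c (fun h => hne' h.symm)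
      omega
    rw [hcc] at hc'2 hc'3
    rw [hSo, htarget]
    refine ((Finset.sum_eq_sum_iff_of_le hpt).mpr ?_).symm
    intro v hv
    have hvne : v ≠ c := (Finset.mem_erase.mp hv).1
    have hdep2 : dep hT c v ≤ 2 := by
      rw [← dist_c_eq hT c v]; exact hc'3 v
    by_cases hpc : par hT c v = c
    · have hd1 : 1 ≤ deg T v := deg_pos hT hvne
      have hd2 : deg T v ≤ 2 := hc'2 v hvne
      rcases (by omega : deg T v = 1 ∨ deg T v = 2) with h | h
      · exact eq_case1 hT hdegc hpc h
      · exact eq_case2 hT hdegc hpc h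
    · have hp2 : deg T (par hT c v) = 2 := by
        have hle := hc'2 (par hT c v) hpc
        have hge := deg_par_ge_two hT hvne hpc
        omega
      have hd1 : deg T v = 1 := by
        have hk : chl hT c v = ∅ := by
          by_contra hch
          obtain ⟨w, hw⟩ := Finset.nonempty_iff_ne_empty.mpr hch
          obtain ⟨hwc, hwp⟩ := (mem_chl hT).mp hw
          have hdw : dep hT c w = dep hT c v + 1 := by
            rw [dep_par hT hwc, hwp]
          have hdv : dep hT c v = dep hT c (par hT c v) + 1 := dep_par hT hvne
          have hdu1 : 1 ≤ dep hT c (par hT c v) := by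
            rcases Nat.eq_zero_or_pos (dep hT c (par hT c v)) with h0 | h0
            · exact absurd ((dep_eq_zero_iff hT).mp h0) hpc
            · exact h0
          have hw2 : T.dist c w ≤ 2 := hc'3 w
          rw [dist_c_eq hT c w] at hw2
          omega
        rw [deg_ne_eq hT hvne, hk]
        simp
      exact eq_case3 hT hpc hd1 hp2
end

section
/- Let T be a chemical tree (a tree with maximum degree at most 4) on n ≥ 7 vertices with maximum degree exactly 3. Then SO(T) ≥ 2√2·n + 3√13 + 3√5 − 14√2, with equality if and only if T is a spider with hub degree 3 and all three legs of length at least 2. -/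
open scoped Classical

namespace Aux16
variable {V : Type*} [Fintype V]

noncomputable def Sd (G : SimpleGraph V) (i : ℕ) : Finset V :=
  Finset.univ.filter (fun u => deg G u = i)

noncomputable def Ec (G : SimpleGraph V) (i j : ℕ) : ℕ :=
  ∑ u ∈ Sd G i, ∑ v ∈ Sd G j, if G.Adj u v then 1 else 0

lemma deg_of_mem_Sd {G : SimpleGraph V} {i : ℕ} {u : V} (h : u ∈ Sd G i) :
    deg G u = i := (Finset.mem_filter.1 h).2

lemma mem_Sd {G : SimpleGraph V} {i : ℕ} {u : V} : u ∈ Sd G i ↔ deg G u = i := by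
  simp [Sd]

lemma sum_Sd {M : Type*} [AddCommMonoid M] (G : SimpleGraph V)
    (h3 : ∀ u, deg G u ∈ ({1, 2, 3} : Finset ℕ)) (f : V → M) :
    ∑ i ∈ ({1, 2, 3} : Finset ℕ), ∑ u ∈ Sd G i, f u = ∑ u, f u :=
  Finset.sum_fiberwise_of_maps_to (fun u _ => h3 u) f

lemma expand3 {M : Type*} [AddCommMonoid M] (f : ℕ → M) :
    ∑ j ∈ ({1, 2, 3} : Finset ℕ), f j = f 1 + f 2 + f 3 := by
  rw [show ({1,2,3} : Finset ℕ) = insert 1 (insert 2 {3}) from rfl,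
    Finset.sum_insert (by decide), Finset.sum_insert (by decide), Finset.sum_singleton,
    add_assoc]

lemma symm_Ec (G : SimpleGraph V) (i j : ℕ) : Ec G i j = Ec G j i := by
  unfold Ec
  rw [Finset.sum_comm]
  exact Finset.sum_congr rfl fun v _ => Finset.sum_congr rfl fun u _ => by
    rw [SimpleGraph.adj_comm]

lemma row_Ec (G : SimpleGraph V) (h3 : ∀ u, deg G u ∈ ({1, 2, 3} : Finset ℕ)) (i : ℕ) :
    ∑ j ∈ ({1, 2, 3} : Finset ℕ), Ec G i j = i * (Sd G i).card := by
  unfold Ec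
  rw [Finset.sum_comm]
  have h1 : ∀ u ∈ Sd G i, (∑ j ∈ ({1,2,3} : Finset ℕ), ∑ v ∈ Sd G j,
      if G.Adj u v then 1 else 0) = i := by
    intro u hu
    rw [sum_Sd G h3 (fun v => if G.Adj u v then 1 else 0), Finset.sum_boole]
    exact ((Finset.mem_filter.1 hu).2 : deg G u = i) ▸ rfl
  rw [Finset.sum_congr rfl h1, Finset.sum_const, smul_eq_mul, mul_comm]

lemma card_Sd (G : SimpleGraph V) (h3 : ∀ u, deg G u ∈ ({1, 2, 3} : Finset ℕ)) :
    (Sd G 1).card + (Sd G 2).card + (Sd G 3).card = Fintype.card V := by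
  have := Finset.card_eq_sum_card_fiberwise (fun u (_ : u ∈ Finset.univ) => h3 u)
  rw [Finset.card_univ] at this
  rw [← expand3 (fun i => (Sd G i).card)]
  exact this.symm

lemma SO_decomp (G : SimpleGraph V) (h3 : ∀ u, deg G u ∈ ({1, 2, 3} : Finset ℕ)) :
    somborIndex G = (1/2) * ∑ i ∈ ({1,2,3} : Finset ℕ), ∑ j ∈ ({1,2,3} : Finset ℕ),
      (Ec G i j : ℝ) * Real.sqrt ((i : ℝ)^2 + (j : ℝ)^2) := by
  unfold somborIndex
  congr 1
  rw [← sum_Sd G h3]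
  refine Finset.sum_congr rfl fun i _ => ?_
  have h1 : ∀ u ∈ Sd G i, (∑ v, if G.Adj u v then
      Real.sqrt ((deg G u : ℝ)^2 + (deg G v : ℝ)^2) else 0)
      = ∑ j ∈ ({1,2,3} : Finset ℕ), ∑ v ∈ Sd G j,
        if G.Adj u v then Real.sqrt ((i : ℝ)^2 + (j : ℝ)^2) else 0 := by
    intro u hu
    have hdu : deg G u = i := (Finset.mem_filter.1 hu).2
    rw [← sum_Sd G h3]
    refine Finset.sum_congr rfl fun j _ => Finset.sum_congr rfl fun v hv => ?_
    have hdv : deg G v = j := (Finset.mem_filter.1 hv).2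
    rw [hdu, hdv]
  rw [Finset.sum_congr rfl h1, Finset.sum_comm]
  refine Finset.sum_congr rfl fun j _ => ?_
  have h2 : ((Ec G i j : ℝ)) = ∑ u ∈ Sd G i, ∑ v ∈ Sd G j,
      if G.Adj u v then (1:ℝ) else 0 := by
    unfold Ec; push_cast; rfl
  rw [h2, Finset.sum_mul]
  refine Finset.sum_congr rfl fun u _ => ?_
  rw [Finset.sum_mul]
  refine Finset.sum_congr rfl fun v _ => ?_
  split <;> simp

end Aux16

lemma sqb2l : (1.41421:ℝ) ≤ Real.sqrt 2 := by
  nlinarith [Real.sq_sqrt (by norm_num : (0:ℝ) ≤ 2), Real.sqrt_nonneg 2]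
lemma sqb2u : Real.sqrt 2 ≤ 1.41422 := by
  nlinarith [Real.sq_sqrt (by norm_num : (0:ℝ) ≤ 2), Real.sqrt_nonneg 2]
lemma sqb5l : (2.23606:ℝ) ≤ Real.sqrt 5 := by
  nlinarith [Real.sq_sqrt (by norm_num : (0:ℝ) ≤ 5), Real.sqrt_nonneg 5]
lemma sqb5u : Real.sqrt 5 ≤ 2.23607 := by
  nlinarith [Real.sq_sqrt (by norm_num : (0:ℝ) ≤ 5), Real.sqrt_nonneg 5]
lemma sqb10l : (3.16227:ℝ) ≤ Real.sqrt 10 := by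
  nlinarith [Real.sq_sqrt (by norm_num : (0:ℝ) ≤ 10), Real.sqrt_nonneg 10]
lemma sqb10u : Real.sqrt 10 ≤ 3.16228 := by
  nlinarith [Real.sq_sqrt (by norm_num : (0:ℝ) ≤ 10), Real.sqrt_nonneg 10]
lemma sqb13l : (3.60555:ℝ) ≤ Real.sqrt 13 := by
  nlinarith [Real.sq_sqrt (by norm_num : (0:ℝ) ≤ 13), Real.sqrt_nonneg 13]
lemma sqb13u : Real.sqrt 13 ≤ 3.60556 := by
  nlinarith [Real.sq_sqrt (by norm_num : (0:ℝ) ≤ 13), Real.sqrt_nonneg 13]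

lemma deg_unique_nbr {V : Type*} [Fintype V] {G : SimpleGraph V} {u v w : V}
    (h1 : deg G u = 1) (hv : G.Adj u v) (hw : G.Adj u w) : v = w := by
  have := Finset.card_le_one.mp (le_of_eq h1)
  exact this v (Finset.mem_filter.2 ⟨Finset.mem_univ _, hv⟩)
    w (Finset.mem_filter.2 ⟨Finset.mem_univ _, hw⟩)

lemma no_adj_leaves {V : Type*} [Fintype V] {G : SimpleGraph V} (hG : G.Connected)
    {u v c : V} (hu : deg G u = 1) (hv : deg G v = 1) (hc : 3 ≤ deg G c)
    (hadj : G.Adj u v) : False := by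
  obtain ⟨p0⟩ := hG.preconnected u c
  obtain ⟨p, hp⟩ := p0.toPath
  cases p with
  | nil => rw [hu] at hc; omega
  | cons h q =>
    rename_i x
    have hx : x = v := deg_unique_nbr hu h hadj
    subst hx
    cases q with
    | nil => rw [hv] at hc; omega
    | cons h' q' =>
      rename_i y
      have hy : y = u := deg_unique_nbr hv h' hadj.symm
      subst hy
      have := hp.support_nodup
      simp only [SimpleGraph.Walk.support_cons, List.nodup_cons] at this
      exact this.1 (List.mem_cons_of_mem _ q'.start_mem_support)


set_option maxHeartbeats 1000000 in
/-- Corollary 1.1 (Δ = 3): minimum Sombor index of chemical trees with `n ≥ 7`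
vertices and maximum degree exactly `3`; equality iff `T` is a spider with hub
degree `3` and all three legs of length at least `2`. -/
theorem stmt_16 {V : Type*} [Fintype V] (T : SimpleGraph V) (n : ℕ)
    (hT : T.IsTree) (hn : Fintype.card V = n) (h7 : 7 ≤ n)
    (hmax : maxDeg T = 3) :
    somborIndex T
      ≥ 2 * Real.sqrt 2 * (n : ℝ) + 3 * Real.sqrt 13 + 3 * Real.sqrt 5
        - 14 * Real.sqrt 2
    ∧ (somborIndex T
        = 2 * Real.sqrt 2 * (n : ℝ) + 3 * Real.sqrt 13 + 3 * Real.sqrt 5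
          - 14 * Real.sqrt 2
      ↔ ∃ c, deg T c = 3 ∧ (∀ v, v ≠ c → deg T v ≤ 2)
          ∧ ∀ v, T.Adj c v → deg T v = 2) := by
  classical
  have hconn := hT.isConnected
  have hdle : ∀ u, deg T u ≤ 3 := fun u => hmax ▸ Finset.le_sup (Finset.mem_univ u)
  have hdge : ∀ u : V, 1 ≤ deg T u := by
    intro u
    obtain ⟨w, hw⟩ := Fintype.exists_ne_of_one_lt_card (by omega) u
    obtain ⟨p⟩ := hconn.preconnected u w
    cases p with
    | nil => exact absurd rfl hw
    | cons h q =>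
      exact Finset.card_pos.mpr ⟨_, Finset.mem_filter.2 ⟨Finset.mem_univ _, h⟩⟩
  have h3 : ∀ u, deg T u ∈ ({1, 2, 3} : Finset ℕ) := by
    intro u
    have := hdge u; have := hdle u
    simp only [Finset.mem_insert, Finset.mem_singleton]
    omega
  -- a hub of degree 3
  have hne : (Finset.univ : Finset V).Nonempty :=
    Finset.univ_nonempty_iff.mpr (Fintype.card_pos_iff.mp (by omega))
  obtain ⟨c0, -, hc0⟩ := Finset.exists_mem_eq_sup Finset.univ hne (deg T)
  have hc03 : deg T c0 = 3 := by rw [← hc0]; exact hmax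
  -- notation
  set n1 := (Aux16.Sd T 1).card with hn1
  set n2 := (Aux16.Sd T 2).card with hn2
  set n3 := (Aux16.Sd T 3).card with hn3
  -- natural-number identities
  have hcards : n1 + n2 + n3 = n := by rw [← hn]; exact Aux16.card_Sd T h3
  have hdegmath : ∀ u, deg T u = T.degree u := by
    intro u
    unfold deg
    rw [← SimpleGraph.card_neighborFinset_eq_degree]
    congr 1
    ext v
    simp [SimpleGraph.mem_neighborFinset]
  have hdegsum : ∑ u : V, deg T u = 2 * (n - 1) := by
    simp only [hdegmath]
    rw [SimpleGraph.sum_degrees_eq_twice_card_edges]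
    have h1 := hT.card_edgeFinset
    omega
  have hhs : 1 * n1 + 2 * n2 + 3 * n3 = 2 * (n - 1) := by
    rw [← hdegsum, ← Aux16.sum_Sd T h3 (deg T), Aux16.expand3]
    have hfib : ∀ i, ∑ u ∈ Aux16.Sd T i, deg T u = i * (Aux16.Sd T i).card := by
      intro i
      rw [Finset.sum_congr rfl (fun u hu => (Aux16.deg_of_mem_Sd hu : deg T u = i)),
        Finset.sum_const, smul_eq_mul, mul_comm]
    rw [hfib 1, hfib 2, hfib 3]
  have hrow1 := Aux16.row_Ec T h3 1
  have hrow2 := Aux16.row_Ec T h3 2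
  have hrow3 := Aux16.row_Ec T h3 3
  rw [Aux16.expand3 (fun j => Aux16.Ec T 1 j)] at hrow1
  rw [Aux16.expand3 (fun j => Aux16.Ec T 2 j)] at hrow2
  rw [Aux16.expand3 (fun j => Aux16.Ec T 3 j)] at hrow3
  rw [Aux16.symm_Ec T 2 1] at hrow2
  rw [Aux16.symm_Ec T 3 1, Aux16.symm_Ec T 3 2] at hrow3
  have he11 : Aux16.Ec T 1 1 = 0 := by
    refine Finset.sum_eq_zero fun u hu => Finset.sum_eq_zero fun v hv => ?_
    have hu1 := Aux16.deg_of_mem_Sd hu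
    have hv1 := Aux16.deg_of_mem_Sd hv
    simp only [ite_eq_right_iff]
    intro hadj
    exact absurd hadj (fun h => no_adj_leaves hconn hu1 hv1 (le_of_eq hc03.symm) h)
  have hn3pos : 1 ≤ n3 :=
    Finset.card_pos.mpr ⟨c0, Finset.mem_filter.2 ⟨Finset.mem_univ _, hc03⟩⟩
  -- abbreviations for edge counts
  set b := Aux16.Ec T 1 2 with hb
  set c3 := Aux16.Ec T 1 3 with hc3
  set p := Aux16.Ec T 2 2 with hp
  set q := Aux16.Ec T 2 3 with hq
  set r := Aux16.Ec T 3 3 with hr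
  rw [he11] at hrow1
  -- hrow1 : 0 + b + c3 = 1 * n1 ; hrow2 : b + p + q = 2 * n2 ; hrow3 : c3 + q + r = 3 * n3
  have H1n : b + c3 = n3 + 2 := by omega
  have H4n : n = (n3 + 2) + n2 + n3 := by omega
  -- real constants
  set s2 := Real.sqrt 2 with hs2
  set s5 := Real.sqrt 5 with hs5
  set s10 := Real.sqrt 10 with hs10
  set s13 := Real.sqrt 13 with hs13
  have sq2 : s2 ^ 2 = 2 := Real.sq_sqrt (by norm_num)
  have sq5 : s5 ^ 2 = 5 := Real.sq_sqrt (by norm_num)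
  have sq10 : s10 ^ 2 = 10 := Real.sq_sqrt (by norm_num)
  have sq13 : s13 ^ 2 = 13 := Real.sq_sqrt (by norm_num)
  have nn2 : (0:ℝ) ≤ s2 := Real.sqrt_nonneg 2
  have nn5 : (0:ℝ) ≤ s5 := Real.sqrt_nonneg 5
  have nn10 : (0:ℝ) ≤ s10 := Real.sqrt_nonneg 10
  have nn13 : (0:ℝ) ≤ s13 := Real.sqrt_nonneg 13
  have b2l : (1.41421:ℝ) ≤ s2 := sqb2l
  have b2u : s2 ≤ 1.41422 := sqb2u
  have b5l : (2.23606:ℝ) ≤ s5 := sqb5l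
  have b5u : s5 ≤ 2.23607 := sqb5u
  have b10l : (3.16227:ℝ) ≤ s10 := sqb10l
  have b10u : s10 ≤ 3.16228 := sqb10u
  have b13l : (3.60555:ℝ) ≤ s13 := sqb13l
  have b13u : s13 ≤ 3.60556 := sqb13u
  have h8 : Real.sqrt 8 = 2 * s2 := by
    rw [hs2, show (8:ℝ) = 2^2 * 2 by norm_num, Real.sqrt_mul (by positivity),
      Real.sqrt_sq (by norm_num)]
  have h18 : Real.sqrt 18 = 3 * s2 := by
    rw [hs2, show (18:ℝ) = 3^2 * 2 by norm_num, Real.sqrt_mul (by positivity),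
      Real.sqrt_sq (by norm_num)]
  -- Sombor index in terms of edge counts
  have hSO : somborIndex T = (b:ℝ) * s5 + (c3:ℝ) * s10 + (p:ℝ) * s2 + (q:ℝ) * s13
      + (r:ℝ) * (3/2 * s2) := by
    rw [Aux16.SO_decomp T h3]
    simp only [Aux16.expand3]
    rw [Aux16.symm_Ec T 2 1, Aux16.symm_Ec T 3 1, Aux16.symm_Ec T 3 2]
    norm_num
    rw [he11, h8, h18]
    push_cast [← hs2, ← hs5, ← hs10, ← hs13, ← hb, ← hc3, ← hp, ← hq, ← hr]
    ring
  -- real versions of the linear identities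
  have H1 : (b:ℝ) + c3 = (n3:ℝ) + 2 := by exact_mod_cast H1n
  have H2 : (b:ℝ) + p + q = 2 * (n2:ℝ) := by exact_mod_cast hrow2
  have H3 : (c3:ℝ) + q + r = 3 * (n3:ℝ) := by exact_mod_cast hrow3
  have H4 : (n:ℝ) = ((n3:ℝ) + 2) + (n2:ℝ) + (n3:ℝ) := by exact_mod_cast H4n
  -- key identity
  set Rem : ℝ := ((n3:ℝ) - 1) * (s5 + 3 * s13 - 8 * s2)
      + (c3:ℝ) * (s10 + 2 * s2 - s5 - s13) + (r:ℝ) * (5/2 * s2 - s13) with hRem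
  have key : somborIndex T = 2 * s2 * (n:ℝ) + 3 * s13 + 3 * s5 - 14 * s2 + Rem := by
    rw [hSO, hRem]
    linear_combination (s5 - s2) * H1 + s2 * H2 + (s13 - s2) * H3 + (-2*s2) * H4
  -- remainder analysis
  have hc3nn : (0:ℝ) ≤ (c3:ℝ) := Nat.cast_nonneg _
  have hrnn : (0:ℝ) ≤ (r:ℝ) := Nat.cast_nonneg _
  have hqnn : (0:ℝ) ≤ (q:ℝ) := Nat.cast_nonneg _
  have hn3R : (1:ℝ) ≤ (n3:ℝ) := by exact_mod_cast hn3pos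
  have hrle : (r:ℝ) ≤ 3 * (n3:ℝ) := by linarith
  have hαpos : (0:ℝ) < s10 + 2 * s2 - s5 - s13 := by linarith
  have hRemPos : ¬ (n3 = 1) → 0 < Rem := by
    intro hne1
    have h2le : 2 ≤ n3 := by omega
    have h2leR : (2:ℝ) ≤ (n3:ℝ) := by exact_mod_cast h2le
    have hKl : (1.73:ℝ) ≤ s5 + 3 * s13 - 8 * s2 := by linarith
    have hβ1 : 5/2 * s2 - s13 ≤ 0 := by linarith
    have hβ2 : (-0.08:ℝ) ≤ 5/2 * s2 - s13 := by linarith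
    have t1 : ((n3:ℝ) - 1) * 1.73 ≤ ((n3:ℝ) - 1) * (s5 + 3 * s13 - 8 * s2) :=
      mul_le_mul_of_nonneg_left hKl (by linarith)
    have t2 : 3 * (n3:ℝ) * (5/2 * s2 - s13) ≤ (r:ℝ) * (5/2 * s2 - s13) :=
      mul_le_mul_of_nonpos_right hrle hβ1
    have t3 : 3 * (n3:ℝ) * (-0.08) ≤ 3 * (n3:ℝ) * (5/2 * s2 - s13) :=
      mul_le_mul_of_nonneg_left hβ2 (by linarith)
    have t4 : 0 ≤ (c3:ℝ) * (s10 + 2 * s2 - s5 - s13) := mul_nonneg hc3nn hαpos.le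
    rw [hRem]
    linarith [t1, t2, t3, t4, h2leR]
  have hr0 : n3 = 1 → r = 0 := by
    intro h1
    have hcard1 : (Aux16.Sd T 3).card = 1 := by rw [← hn3]; exact h1
    obtain ⟨c1, hc1⟩ := Finset.card_eq_one.mp hcard1
    rw [hr]
    unfold Aux16.Ec
    rw [hc1, Finset.sum_singleton, Finset.sum_singleton]
    simp
  have hRemNN : 0 ≤ Rem := by
    by_cases h1 : n3 = 1
    · have hr0' := hr0 h1
      have hn3r : (n3:ℝ) = 1 := by exact_mod_cast h1
      have hrr : (r:ℝ) = 0 := by rw [hr0']; norm_num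
      rw [hRem, hn3r, hrr]
      have t4 : 0 ≤ (c3:ℝ) * (s10 + 2 * s2 - s5 - s13) := mul_nonneg hc3nn hαpos.le
      linarith
    · exact (hRemPos h1).le
  constructor
  · rw [key]; linarith
  constructor
  · -- equality implies spider
    intro heq
    have hRem0 : Rem = 0 := by rw [key] at heq; linarith
    have h1 : n3 = 1 := by
      by_contra hne1
      exact absurd hRem0 (ne_of_gt (hRemPos hne1))
    have hr0' := hr0 h1
    have hn3r : (n3:ℝ) = 1 := by exact_mod_cast h1
    have hrr : (r:ℝ) = 0 := by rw [hr0']; norm_num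
    have hc3r : (c3:ℝ) * (s10 + 2 * s2 - s5 - s13) = 0 := by
      rw [hRem, hn3r, hrr] at hRem0
      linarith
    have hc30 : c3 = 0 := by
      have : (c3:ℝ) = 0 := by
        rcases mul_eq_zero.mp hc3r with h | h
        · exact h
        · linarith
      exact_mod_cast this
    have hcard1 : (Aux16.Sd T 3).card = 1 := by rw [← hn3]; exact h1
    obtain ⟨c1, hc1⟩ := Finset.card_eq_one.mp hcard1
    have hc1deg : deg T c1 = 3 :=
      Aux16.deg_of_mem_Sd (by rw [hc1]; exact Finset.mem_singleton_self c1)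
    refine ⟨c1, hc1deg, ?_, ?_⟩
    · intro v hv
      by_contra hgt
      have hv3 : deg T v = 3 := by have := hdle v; omega
      have hmem : v ∈ Aux16.Sd T 3 := Aux16.mem_Sd.mpr hv3
      rw [hc1] at hmem
      exact hv (Finset.mem_singleton.mp hmem)
    · intro v hadj
      have h1le := hdge v
      have hvne : v ≠ c1 := hadj.ne'
      have hne3 : deg T v ≠ 3 := fun h =>
        hvne (Finset.mem_singleton.mp (hc1 ▸ Aux16.mem_Sd.mpr h))
      have hne1 : deg T v ≠ 1 := by
        intro hv1
        have hmem1 : v ∈ Aux16.Sd T 1 := Aux16.mem_Sd.mpr hv1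
        have hmem3 : c1 ∈ Aux16.Sd T 3 := by rw [hc1]; exact Finset.mem_singleton_self c1
        have h0 := hc30
        rw [hc3] at h0
        unfold Aux16.Ec at h0
        have h0' := Finset.sum_eq_zero_iff.mp h0 v hmem1
        have h0'' := Finset.sum_eq_zero_iff.mp h0' c1 hmem3
        rw [if_pos hadj.symm] at h0''
        exact one_ne_zero h0''
      have := hdle v
      omega
  · -- spider implies equality
    rintro ⟨c, hcdeg, hcle, hcnb⟩
    have hS3 : Aux16.Sd T 3 = {c} := by
      ext u
      rw [Aux16.mem_Sd, Finset.mem_singleton]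
      constructor
      · intro hu
        by_contra hne'
        have := hcle u hne'
        omega
      · rintro rfl; exact hcdeg
    have h1 : n3 = 1 := by rw [hn3, hS3]; simp
    have hr0' := hr0 h1
    have hc30 : c3 = 0 := by
      rw [hc3]
      unfold Aux16.Ec
      refine Finset.sum_eq_zero fun u hu => Finset.sum_eq_zero fun v hv => ?_
      have hu1 := Aux16.deg_of_mem_Sd hu
      have hv3 : v = c := Finset.mem_singleton.mp (hS3 ▸ hv)
      subst hv3
      simp only [ite_eq_right_iff]
      intro hadj
      have := hcnb u hadj.symm
      omega
    have hn3r : (n3:ℝ) = 1 := by exact_mod_cast h1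
    have hrr : (r:ℝ) = 0 := by rw [hr0']; norm_num
    have hcc : (c3:ℝ) = 0 := by rw [hc30]; norm_num
    rw [key, hRem, hn3r, hrr, hcc]
    ring
end

section
/- Let T be a chemical tree on n ≥ 7 vertices with maximum degree exactly 4. Then SO(T) ≥ 4·√20 + √8·(n − 9) + 4·√5, with equality if and only if T is a spider with hub degree 4 and all four legs of length at least 2. -/
open scoped Classical

set_option linter.unusedSectionVars false
set_option linter.unusedVariables false

namespace SomborAux

variable {V : Type*} [Fintype V]

/-- parent of `v` in tree `T` rooted at `c`. -/
noncomputable def par (T : SimpleGraph V) (c : V) (v : V) : V :=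
  if h : ∃ u, T.Adj v u ∧ T.dist u c + 1 = T.dist v c then h.choose else c

variable {T : SimpleGraph V} {c : V}

lemma par_exists (hc : T.Connected) {v : V} (hv : v ≠ c) :
    ∃ u, T.Adj v u ∧ T.dist u c + 1 = T.dist v c := by
  obtain ⟨p, hp⟩ := hc.exists_walk_length_eq_dist v c
  cases p with
  | nil => exact absurd rfl hv
  | @cons _ u _ h q =>
    refine ⟨u, h, ?_⟩
    have h1 : T.dist u c ≤ q.length := SimpleGraph.dist_le q
    have h2 : T.dist v c ≤ T.dist v u + T.dist u c := hc.dist_triangle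
    have h3 : T.dist v u = 1 := SimpleGraph.dist_eq_one_iff_adj.mpr h
    simp only [SimpleGraph.Walk.length_cons] at hp
    omega

lemma par_spec (hc : T.Connected) {v : V} (hv : v ≠ c) :
    T.Adj v (par T c v) ∧ T.dist (par T c v) c + 1 = T.dist v c := by
  rw [par, dif_pos (par_exists hc hv)]
  exact (par_exists hc hv).choose_spec

@[simp] lemma par_root : par T c c = c := by
  rw [par, dif_neg]
  rintro ⟨u, -, hd⟩
  rw [SimpleGraph.dist_self] at hd
  omega

lemma parent_unique (hT : T.IsTree) {v u₁ u₂ : V}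
    (h1 : T.Adj v u₁) (h2 : T.Adj v u₂)
    (d1 : T.dist u₁ c + 1 = T.dist v c) (d2 : T.dist u₂ c + 1 = T.dist v c) :
    u₁ = u₂ := by
  have hc := hT.isConnected
  have key : ∀ u : V, T.Adj v u → T.dist u c + 1 = T.dist v c →
      ∃ q : T.Walk v c, q.IsPath ∧ q.support.tail.head? = some u := by
    intro u hu hd
    obtain ⟨p, hp, hl⟩ := (hc u c).exists_path_of_dist
    have hv : v ∉ p.support := by
      intro hvs
      have h1 : T.dist v c ≤ (p.dropUntil v hvs).length := SimpleGraph.dist_le _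
      have h2 : (p.dropUntil v hvs).length ≤ p.length := by
        conv_rhs => rw [← p.take_spec hvs]
        rw [SimpleGraph.Walk.length_append]
        omega
      omega
    refine ⟨SimpleGraph.Walk.cons hu p, hp.cons hv, ?_⟩
    rw [SimpleGraph.Walk.support_cons, List.tail_cons, SimpleGraph.Walk.support_eq_cons p]
    rfl
  obtain ⟨q1, hq1, hh1⟩ := key u₁ h1 d1
  obtain ⟨q2, hq2, hh2⟩ := key u₂ h2 d2
  have : (⟨q1, hq1⟩ : T.Path v c) = ⟨q2, hq2⟩ :=
    (SimpleGraph.isAcyclic_iff_path_unique.mp hT.IsAcyclic) _ _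
  have hq : q1 = q2 := congrArg Subtype.val this
  rw [hq, hh2] at hh1
  exact (Option.some.inj hh1).symm

lemma dist_ne_of_adj (hT : T.IsTree) {u v : V} (h : T.Adj u v) :
    T.dist u c ≠ T.dist v c := by
  have hc := hT.isConnected
  intro heq
  rcases Nat.eq_zero_or_pos (T.dist u c) with h0 | hpos
  · have hu : u = c := hc.dist_eq_zero_iff.mp h0
    have hv : v = c := hc.dist_eq_zero_iff.mp (heq ▸ h0)
    subst hu; subst hv; exact T.loopless.irrefl _ h
  · obtain ⟨p, hp, hl⟩ := (hc u c).exists_path_of_dist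
    have hvs : v ∉ p.support := by
      intro hvs
      have h1 : T.dist v c ≤ (p.dropUntil v hvs).length := SimpleGraph.dist_le _
      have h2 : (p.takeUntil v hvs).length ≠ 0 := by
        intro h0
        exact h.ne' (SimpleGraph.Walk.eq_of_length_eq_zero h0).symm
      have h3 : (p.takeUntil v hvs).length + (p.dropUntil v hvs).length = p.length := by
        conv_rhs => rw [← p.take_spec hvs]
        rw [SimpleGraph.Walk.length_append]
      omega
    obtain ⟨q, hq, hlq⟩ := (hc v c).exists_path_of_dist
    have : (⟨SimpleGraph.Walk.cons h.symm p, hp.cons hvs⟩ : T.Path v c) = ⟨q, hq⟩ :=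
      (SimpleGraph.isAcyclic_iff_path_unique.mp hT.IsAcyclic) _ _
    have hlen := congrArg (fun z : T.Path v c => z.val.length) this
    simp only [SimpleGraph.Walk.length_cons] at hlen
    omega

lemma adj_dichot (hT : T.IsTree) {u v : V} (h : T.Adj u v) :
    T.dist u c = T.dist v c + 1 ∨ T.dist v c = T.dist u c + 1 := by
  have hc := hT.isConnected
  have h1 : T.dist u c ≤ T.dist v c + 1 := by
    have := hc.dist_triangle (u := u) (v := v) (w := c)
    have hd : T.dist u v = 1 := SimpleGraph.dist_eq_one_iff_adj.mpr h
    omega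
  have h2 : T.dist v c ≤ T.dist u c + 1 := by
    have := hc.dist_triangle (u := v) (v := u) (w := c)
    have hd : T.dist v u = 1 := SimpleGraph.dist_eq_one_iff_adj.mpr h.symm
    omega
  have h3 := dist_ne_of_adj (c := c) hT h
  omega

lemma par_eq_of (hT : T.IsTree) {v u : V} (h : T.Adj v u)
    (hd : T.dist u c + 1 = T.dist v c) : par T c v = u := by
  have hv : v ≠ c := by
    intro h'; subst h'
    rw [SimpleGraph.dist_self] at hd
    omega
  obtain ⟨ha, hb⟩ := par_spec hT.isConnected hv
  exact parent_unique hT ha h hb hd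

/-- for adjacent u v, exactly one is the parent of the other -/
lemma par_adj_cases (hT : T.IsTree) {u v : V} (h : T.Adj u v) :
    par T c u = v ∨ par T c v = u := by
  rcases adj_dichot (c := c) hT h with hd | hd
  · exact Or.inl (par_eq_of hT h hd.symm)
  · exact Or.inr (par_eq_of hT h.symm hd.symm)

lemma not_both_par (hT : T.IsTree) {u v : V} (h : T.Adj u v)
    (h1 : par T c u = v) (h2 : par T c v = u) : False := by
  have hu : u ≠ c := by
    intro h'; subst h'
    rw [par_root] at h1
    subst h1; exact T.loopless.irrefl _ h
  have hv : v ≠ c := by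
    intro h'; subst h'
    rw [par_root] at h2
    subst h2; exact T.loopless.irrefl _ h.symm
  have s1 := (par_spec hT.isConnected hu).2
  have s2 := (par_spec hT.isConnected hv).2
  rw [h1] at s1; rw [h2] at s2
  omega

/-- children of v -/
noncomputable def child (T : SimpleGraph V) (c : V) (v : V) : Finset V :=
  Finset.univ.filter (fun u => T.Adj v u ∧ par T c u = v)

/-- descendants of v (including v) -/
noncomputable def desc (T : SimpleGraph V) (c : V) (v : V) : Finset V :=
  Finset.univ.filter (fun u => ∃ k, (par T c)^[k] u = v)

lemma mem_child {u v : V} : u ∈ child T c v ↔ T.Adj v u ∧ par T c u = v := by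
  simp [child]

lemma mem_desc {u v : V} : u ∈ desc T c v ↔ ∃ k, (par T c)^[k] u = v := by
  simp [desc]

lemma self_mem_desc (v : V) : v ∈ desc T c v := mem_desc.mpr ⟨0, rfl⟩

lemma child_ne_root (hu : u ∈ child T c v) : u ≠ c := by
  intro h'; subst h'
  obtain ⟨hadj, hp⟩ := mem_child.mp hu
  rw [par_root] at hp
  subst hp
  exact T.loopless.irrefl _ hadj

lemma par_iter_root (k : ℕ) : (par T c)^[k] c = c :=
  Function.iterate_fixed par_root k

lemma dist_lt_of_iter (hc : T.Connected) :
    ∀ (k : ℕ) {u v : V}, (par T c)^[k] u = v → u ≠ v → T.dist v c < T.dist u c := by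
  intro k
  induction k with
  | zero => intro u v h hne; exact absurd h hne
  | succ k ih =>
    intro u v h hne
    rw [Function.iterate_succ_apply] at h
    by_cases huc : u = c
    · subst huc
      rw [par_root, par_iter_root] at h
      exact absurd h hne
    · have hs := (par_spec hc huc).2
      by_cases hpv : par T c u = v
      · rw [hpv] at hs; omega
      · have := ih h hpv
        omega

lemma desc_trans_child (hu : u ∈ child T c v) (hw : w ∈ desc T c u) : w ∈ desc T c v := by
  obtain ⟨k, hk⟩ := mem_desc.mp hw
  exact mem_desc.mpr ⟨k + 1, by rw [Function.iterate_succ_apply', hk, (mem_child.mp hu).2]⟩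

lemma not_mem_desc_child (hc : T.Connected) (hu : u ∈ child T c v) :
    v ∉ desc T c u := by
  intro hmem
  obtain ⟨huv, hpu⟩ := mem_child.mp hu
  obtain ⟨k, hk⟩ := mem_desc.mp hmem
  have hune : u ≠ c := child_ne_root hu
  have hs := (par_spec hc hune).2
  rw [hpu] at hs
  have := dist_lt_of_iter hc k hk huv.ne
  omega

lemma desc_eq (hc : T.Connected) (v : V) :
    desc T c v = insert v ((child T c v).biUnion (desc T c)) := by
  ext w
  simp only [Finset.mem_insert, Finset.mem_biUnion]
  constructor
  · intro hw
    obtain ⟨k, hk⟩ := mem_desc.mp hw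
    clear hw
    induction k generalizing w with
    | zero => exact Or.inl hk
    | succ k ih =>
      by_cases hwc : w = c
      · subst hwc
        rw [par_iter_root] at hk
        exact Or.inl hk
      · rw [Function.iterate_succ_apply] at hk
        rcases ih (par T c w) hk with h | ⟨x, hx, hdx⟩
        · exact Or.inr ⟨w, mem_child.mpr ⟨h ▸ (par_spec hc hwc).1.symm, h⟩, self_mem_desc w⟩
        · obtain ⟨j, hj⟩ := mem_desc.mp hdx
          exact Or.inr ⟨x, hx, mem_desc.mpr ⟨j + 1, by
            rw [Function.iterate_succ_apply]; exact hj⟩⟩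
  · rintro (rfl | ⟨x, hx, hdx⟩)
    · exact self_mem_desc w
    · exact desc_trans_child hx hdx

lemma not_mem_biUnion (hc : T.Connected) (v : V) :
    v ∉ (child T c v).biUnion (desc T c) := by
  intro h
  obtain ⟨u, hu, hd⟩ := Finset.mem_biUnion.mp h
  exact not_mem_desc_child hc hu hd

lemma iter_eq_iter (hc : T.Connected) {w u₁ u₂ : V} {k₁ k₂ : ℕ}
    (h1 : (par T c)^[k₁] w = u₁) (h2 : (par T c)^[k₂] w = u₂)
    (hd : T.dist u₁ c = T.dist u₂ c) : u₁ = u₂ := by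
  by_contra hne
  rcases le_total k₁ k₂ with hk | hk
  · have : (par T c)^[k₂ - k₁] u₁ = u₂ := by
      rw [← h1, ← Function.iterate_add_apply, Nat.sub_add_cancel hk, h2]
    have := dist_lt_of_iter hc _ this hne
    omega
  · have : (par T c)^[k₁ - k₂] u₂ = u₁ := by
      rw [← h2, ← Function.iterate_add_apply, Nat.sub_add_cancel hk, h1]
    have := dist_lt_of_iter hc _ this (Ne.symm hne)
    omega

lemma child_dist (hc : T.Connected) (hu : u ∈ child T c v) :
    T.dist u c = T.dist v c + 1 := by
  have hune := child_ne_root hu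
  have hs := (par_spec hc hune).2
  rw [(mem_child.mp hu).2] at hs
  omega

lemma desc_disjoint (hc : T.Connected) (v : V) :
    (child T c v : Set V).PairwiseDisjoint (desc T c) := by
  intro u₁ h1 u₂ h2 hne
  simp only [Finset.coe_mem, Finset.mem_coe] at h1 h2
  intro s hs1 hs2 x hx
  exfalso
  have hx1 := hs1 hx
  have hx2 := hs2 hx
  obtain ⟨k₁, hk1⟩ := mem_desc.mp hx1
  obtain ⟨k₂, hk2⟩ := mem_desc.mp hx2
  have hd : T.dist u₁ c = T.dist u₂ c := by
    rw [child_dist hc h1, child_dist hc h2]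
  exact hne (iter_eq_iter hc hk1 hk2 hd)

lemma desc_ssubset (hc : T.Connected) (hu : u ∈ child T c v) :
    desc T c u ⊂ desc T c v := by
  constructor
  · intro w hw
    exact desc_trans_child hu hw
  · intro hsub
    exact not_mem_desc_child hc hu (hsub (self_mem_desc v))

lemma child_eq_erase (hT : T.IsTree) (hv : v ≠ c) :
    child T c v = (Finset.univ.filter (fun u => T.Adj v u)).erase (par T c v) := by
  have hc := hT.isConnected
  ext u
  simp only [child, Finset.mem_filter, Finset.mem_erase, Finset.mem_univ, true_and]
  constructor
  · rintro ⟨hadj, hp⟩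
    refine ⟨?_, hadj⟩
    intro h'; subst h'
    -- par (par v) = v, contradiction on distances
    by_cases hpc : par T c v = c
    · rw [hpc, par_root] at hp; exact hv hp.symm
    · have s1 := (par_spec hc hv).2
      have s2 := (par_spec hc hpc).2
      rw [hp] at s2
      omega
  · rintro ⟨hne, hadj⟩
    refine ⟨hadj, ?_⟩
    rcases adj_dichot (c := c) hT hadj with hd | hd
    · exact absurd (par_eq_of hT hadj hd.symm) hne.symm
    · exact par_eq_of hT hadj.symm hd.symm

lemma card_child (hT : T.IsTree) (hv : v ≠ c) :
    (child T c v).card = deg T v - 1 := by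
  rw [child_eq_erase hT hv, Finset.card_erase_of_mem]
  · rfl
  · simp only [Finset.mem_filter, Finset.mem_univ, true_and]
    exact (par_spec hT.isConnected hv).1

lemma deg_pos (hT : T.IsTree) (hv : v ≠ c) : 1 ≤ deg T v := by
  have : par T c v ∈ Finset.univ.filter (fun u => T.Adj v u) := by
    simp only [Finset.mem_filter, Finset.mem_univ, true_and]
    exact (par_spec hT.isConnected hv).1
  exact Finset.card_pos.mpr ⟨_, this⟩

lemma child_root_eq (hT : T.IsTree) :
    child T c c = Finset.univ.filter (fun u => T.Adj c u) := by
  ext u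
  simp only [child, Finset.mem_filter, Finset.mem_univ, true_and]
  constructor
  · rintro ⟨hadj, -⟩; exact hadj
  · intro hadj
    refine ⟨hadj, ?_⟩
    have : T.dist c c + 1 = T.dist u c := by
      rcases adj_dichot (c := c) hT hadj.symm with hd | hd
      · omega
      · rw [SimpleGraph.dist_self] at hd ⊢
        omega
    exact par_eq_of hT hadj.symm this

lemma card_child_root (hT : T.IsTree) : (child T c c).card = deg T c := by
  rw [child_root_eq hT]; rfl

lemma reach_root (hc : T.Connected) (w : V) : ∃ k, (par T c)^[k] w = c := by
  have main : ∀ (n : ℕ) (w : V), T.dist w c ≤ n → ∃ k, (par T c)^[k] w = c := by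
    intro n
    induction n with
    | zero =>
      intro w hw
      have : w = c := hc.dist_eq_zero_iff.mp (Nat.le_zero.mp hw)
      exact ⟨0, this⟩
    | succ n ih =>
      intro w hw
      by_cases hwc : w = c
      · exact ⟨0, hwc⟩
      · have hs := (par_spec hc hwc).2
        obtain ⟨k, hk⟩ := ih (par T c w) (by omega)
        exact ⟨k + 1, by rw [Function.iterate_succ_apply]; exact hk⟩
  exact main _ w le_rfl

lemma desc_root (hc : T.Connected) : desc T c c = Finset.univ := by
  ext w
  simp only [Finset.mem_univ, iff_true]
  exact mem_desc.mpr (reach_root hc w)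

/-- weight of the edge from u up to its parent -/
noncomputable def wt (T : SimpleGraph V) (c : V) (u : V) : ℝ :=
  Real.sqrt ((deg T u : ℝ) ^ 2 + (deg T (par T c u) : ℝ) ^ 2)

/-- sum of up-edge weights over the subtree of v -/
noncomputable def Wsum (T : SimpleGraph V) (c : V) (v : V) : ℝ :=
  ∑ u ∈ desc T c v, wt T c u

lemma Wsum_rec (hc : T.Connected) (hv : v ≠ c) :
    Wsum T c v = wt T c v + ∑ u ∈ child T c v, Wsum T c u := by
  rw [Wsum, desc_eq hc v, Finset.sum_insert (not_mem_biUnion hc v),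
    Finset.sum_biUnion (desc_disjoint hc v)]
  rfl

lemma card_rec (hc : T.Connected) (v : V) :
    (desc T c v).card = 1 + ∑ u ∈ child T c v, (desc T c u).card := by
  rw [desc_eq hc v, Finset.card_insert_of_notMem (not_mem_biUnion hc v),
    Finset.card_biUnion]
  · omega
  · intro x hx y hy hxy
    exact desc_disjoint hc v (Finset.mem_coe.mpr hx) (Finset.mem_coe.mpr hy) hxy

lemma wt_symm (u v : V) :
    Real.sqrt ((deg T u : ℝ) ^ 2 + (deg T v : ℝ) ^ 2)
      = Real.sqrt ((deg T v : ℝ) ^ 2 + (deg T u : ℝ) ^ 2) := by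
  rw [add_comm]

lemma sombor_eq (hT : T.IsTree) (c : V) :
    somborIndex T = ∑ u ∈ Finset.univ.erase c, wt T c u := by
  classical
  have hc := hT.isConnected
  have key : ∀ u v : V,
      (if T.Adj u v then Real.sqrt ((deg T u : ℝ) ^ 2 + (deg T v : ℝ) ^ 2) else 0)
      = (if T.Adj u v ∧ par T c u = v
          then Real.sqrt ((deg T u : ℝ) ^ 2 + (deg T v : ℝ) ^ 2) else 0)
        + (if T.Adj u v ∧ par T c v = u
          then Real.sqrt ((deg T u : ℝ) ^ 2 + (deg T v : ℝ) ^ 2) else 0) := by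
    intro u v
    by_cases h : T.Adj u v
    · rcases par_adj_cases (c := c) hT h with h1 | h1
      · have h2 : ¬ par T c v = u := fun h2 => not_both_par hT h h1 h2
        simp [h, h1, h2]
      · have h2 : ¬ par T c u = v := fun h2 => not_both_par hT h h2 h1
        simp [h, h1, h2]
    · simp [h]
  have inner1 : ∀ u : V,
      (∑ v : V, if T.Adj u v ∧ par T c u = v
        then Real.sqrt ((deg T u : ℝ) ^ 2 + (deg T v : ℝ) ^ 2) else 0)
      = if u = c then 0 else wt T c u := by
    intro u
    by_cases huc : u = c
    · subst huc
      simp only [if_pos rfl]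
      apply Finset.sum_eq_zero
      intro v _
      rw [if_neg]
      rintro ⟨hadj, hp⟩
      rw [par_root] at hp; subst hp
      exact T.loopless.irrefl _ hadj
    · rw [if_neg huc]
      have hadj := (par_spec hc huc).1
      rw [Finset.sum_eq_single (par T c u)]
      · rw [if_pos ⟨hadj, rfl⟩]; rfl
      · intro v _ hne
        rw [if_neg]
        rintro ⟨-, hp⟩
        exact hne hp.symm
      · intro h; exact absurd (Finset.mem_univ _) h
  have inner2 : ∀ v : V,
      (∑ u : V, if T.Adj u v ∧ par T c v = u
        then Real.sqrt ((deg T u : ℝ) ^ 2 + (deg T v : ℝ) ^ 2) else 0)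
      = if v = c then 0 else wt T c v := by
    intro v
    by_cases hvc : v = c
    · subst hvc
      simp only [if_pos rfl]
      apply Finset.sum_eq_zero
      intro u _
      rw [if_neg]
      rintro ⟨hadj, hp⟩
      rw [par_root] at hp; subst hp
      exact T.loopless.irrefl _ hadj
    · rw [if_neg hvc]
      have hadj := (par_spec hc hvc).1
      rw [Finset.sum_eq_single (par T c v)]
      · rw [if_pos ⟨hadj.symm, rfl⟩, wt, wt_symm]
      · intro u _ hne
        rw [if_neg]
        rintro ⟨-, hp⟩
        exact hne hp.symm
      · intro h; exact absurd (Finset.mem_univ _) h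
  have split : (∑ u : V, ∑ v : V,
      if T.Adj u v then Real.sqrt ((deg T u : ℝ) ^ 2 + (deg T v : ℝ) ^ 2) else 0)
      = 2 * ∑ u ∈ Finset.univ.erase c, wt T c u := by
    have : ∀ u : V, (∑ v : V,
        if T.Adj u v then Real.sqrt ((deg T u : ℝ) ^ 2 + (deg T v : ℝ) ^ 2) else 0)
        = (∑ v : V, if T.Adj u v ∧ par T c u = v
            then Real.sqrt ((deg T u : ℝ) ^ 2 + (deg T v : ℝ) ^ 2) else 0)
          + (∑ v : V, if T.Adj u v ∧ par T c v = u
            then Real.sqrt ((deg T u : ℝ) ^ 2 + (deg T v : ℝ) ^ 2) else 0) := by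
      intro u
      rw [← Finset.sum_add_distrib]
      exact Finset.sum_congr rfl (fun v _ => key u v)
    rw [Finset.sum_congr rfl (fun u _ => this u), Finset.sum_add_distrib]
    rw [Finset.sum_congr rfl (fun u (_ : u ∈ Finset.univ) => inner1 u)]
    rw [Finset.sum_comm]
    rw [Finset.sum_congr rfl (fun v (_ : v ∈ Finset.univ) => inner2 v)]
    rw [two_mul]
    have herase : ∀ (f : V → ℝ), (∑ u : V, if u = c then 0 else f u)
        = ∑ u ∈ Finset.univ.erase c, f u := by
      intro f
      rw [← Finset.sum_erase_add _ _ (Finset.mem_univ c), if_pos rfl, add_zero]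
      exact Finset.sum_congr rfl (fun x hx => if_neg (Finset.mem_erase.mp hx).1)
    congr 1 <;> exact herase _
  rw [somborIndex, split]
  ring

lemma erase_eq_biUnion (hc : T.Connected) :
    Finset.univ.erase c = (child T c c).biUnion (desc T c) := by
  rw [← desc_root hc, desc_eq hc c, Finset.erase_insert (not_mem_biUnion hc c)]

lemma sombor_eq_children (hT : T.IsTree) (c : V) :
    somborIndex T = ∑ u ∈ child T c c, Wsum T c u := by
  rw [sombor_eq hT c, erase_eq_biUnion hT.isConnected,
    Finset.sum_biUnion (desc_disjoint hT.isConnected c)]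
  rfl

lemma card_sum_children (hc : T.Connected) :
    1 + ∑ u ∈ child T c c, (desc T c u).card = Fintype.card V := by
  have := card_rec (c := c) hc c
  rw [desc_root hc] at this
  rw [← this]
  rfl

lemma two_le_deg_par (hT : T.IsTree) (hc4 : deg T c = 4) (hv : v ≠ c) :
    2 ≤ deg T (par T c v) := by
  have hc := hT.isConnected
  by_cases hpc : par T c v = c
  · rw [hpc, hc4]; omega
  · have s1 := (par_spec hc hv).2
    have s2 := (par_spec hc hpc).2
    have hne : v ≠ par T c (par T c v) := by
      intro h
      rw [← h] at s2
      omega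
    have hsub : {v, par T c (par T c v)} ⊆
        Finset.univ.filter (fun u => T.Adj (par T c v) u) := by
      intro x hx
      simp only [Finset.mem_insert, Finset.mem_singleton] at hx
      simp only [Finset.mem_filter, Finset.mem_univ, true_and]
      rcases hx with rfl | rfl
      · exact (par_spec hc hv).1.symm
      · exact (par_spec hc hpc).1
    have := Finset.card_le_card hsub
    rw [Finset.card_pair hne] at this
    exact this

lemma deg_le_of_max (hmax : maxDeg T = 4) (v : V) : deg T v ≤ 4 := by
  rw [← hmax]
  exact Finset.le_sup (Finset.mem_univ v)

/-- the potential function -/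
noncomputable def psi (x : ℝ) : ℝ :=
  Real.sqrt (x ^ 2 + 4) + Real.sqrt 5 - 2 * Real.sqrt 8

lemma sqrt_bounds :
    (2.2360 : ℝ) < Real.sqrt 5 ∧ Real.sqrt 5 < 2.2361 ∧
    (2.8284 : ℝ) < Real.sqrt 8 ∧ Real.sqrt 8 < 2.8285 ∧
    (3.1622 : ℝ) < Real.sqrt 10 ∧ Real.sqrt 10 < 3.1623 ∧
    (3.6055 : ℝ) < Real.sqrt 13 ∧ Real.sqrt 13 < 3.6056 ∧
    (4.1231 : ℝ) < Real.sqrt 17 ∧ Real.sqrt 17 < 4.1232 ∧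
    (4.2426 : ℝ) < Real.sqrt 18 ∧ Real.sqrt 18 < 4.2427 ∧
    (4.4721 : ℝ) < Real.sqrt 20 ∧ Real.sqrt 20 < 4.4722 ∧
    (5.6568 : ℝ) < Real.sqrt 32 ∧ Real.sqrt 32 < 5.6569 := by
  refine ⟨?_, ?_, ?_, ?_, ?_, ?_, ?_, ?_, ?_, ?_, ?_, ?_, ?_, ?_, ?_, ?_⟩ <;>
  first
    | (rw [Real.lt_sqrt (by norm_num)]; norm_num)
    | (rw [Real.sqrt_lt' (by norm_num)]; norm_num)

lemma main_ind (hT : T.IsTree) (hc4 : deg T c = 4) (hmax : ∀ v, deg T v ≤ 4) :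
    ∀ (m : ℕ) (v : V), v ≠ c → (desc T c v).card ≤ m →
      (Real.sqrt 8 * (desc T c v).card + psi (deg T (par T c v)) ≤ Wsum T c v) ∧
      (Wsum T c v = Real.sqrt 8 * (desc T c v).card + psi (deg T (par T c v)) →
        (∀ u ∈ desc T c v, deg T u ≤ 2) ∧ (deg T (par T c v) = 4 → deg T v = 2)) := by
  obtain ⟨s5l, s5u, s8l, s8u, s10l, s10u, s13l, s13u, s17l, s17u, s18l, s18u,
    s20l, s20u, s32l, s32u⟩ := sqrt_bounds
  have s25 : Real.sqrt 25 = 5 := by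
    rw [show (25:ℝ) = 5^2 by norm_num, Real.sqrt_sq (by norm_num)]
  have hc := hT.isConnected
  intro m
  induction m with
  | zero =>
    intro v hv hcard
    have := self_mem_desc (T := T) (c := c) v
    have : 0 < (desc T c v).card := Finset.card_pos.mpr ⟨v, this⟩
    omega
  | succ m ih =>
    intro v hv hcard
    have hrec := Wsum_rec (c := c) hc hv
    have hcr := card_rec (c := c) hc v
    have hdp2 : 2 ≤ deg T (par T c v) := two_le_deg_par hT hc4 hv
    have hdp4 : deg T (par T c v) ≤ 4 := hmax _
    have hd1 : 1 ≤ deg T v := deg_pos hT hv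
    have hd4 : deg T v ≤ 4 := hmax v
    have hcc : (child T c v).card = deg T v - 1 := card_child hT hv
    have hdcase : deg T v = 1 ∨ deg T v = 2 ∨ deg T v = 3 ∨ deg T v = 4 := by omega
    have hdpcase : deg T (par T c v) = 2 ∨ deg T (par T c v) = 3 ∨
        deg T (par T c v) = 4 := by omega
    rcases hdcase with hd | hd | hd | hd
    · -- leaf
      have hch : child T c v = ∅ := Finset.card_eq_zero.mp (by omega)
      have hdesc : desc T c v = {v} := by
        rw [desc_eq hc v, hch]
        simp
      have hW : Wsum T c v = wt T c v := by
        rw [hrec, hch]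
        simp
      have hcd : ((desc T c v).card : ℝ) = 1 := by rw [hdesc]; simp
      have hclause1 : ∀ u ∈ desc T c v, deg T u ≤ 2 := by
        intro u hu
        rw [hdesc, Finset.mem_singleton] at hu
        subst hu
        omega
      rcases hdpcase with hdp | hdp | hdp
      · -- dp = 2 : exact equality case
        have hwt : wt T c v = Real.sqrt 5 := by
          rw [wt, hd, hdp]; norm_num
        have hpsi : psi ((deg T (par T c v) : ℝ)) =
            Real.sqrt 8 + Real.sqrt 5 - 2 * Real.sqrt 8 := by
          rw [hdp, psi]; norm_num
        constructor
        · rw [hW, hwt, hcd, hpsi]; ring_nf; rfl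
        · intro _
          exact ⟨hclause1, by omega⟩
      · -- dp = 3
        have hwt : wt T c v = Real.sqrt 10 := by
          rw [wt, hd, hdp]; norm_num
        have hpsi : psi ((deg T (par T c v) : ℝ)) =
            Real.sqrt 13 + Real.sqrt 5 - 2 * Real.sqrt 8 := by
          rw [hdp, psi]; norm_num
        constructor
        · rw [hW, hwt, hcd, hpsi]; linarith
        · intro _
          exact ⟨hclause1, by omega⟩
      · -- dp = 4 : strict
        have hwt : wt T c v = Real.sqrt 17 := by
          rw [wt, hd, hdp]; norm_num
        have hpsi : psi ((deg T (par T c v) : ℝ)) =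
            Real.sqrt 20 + Real.sqrt 5 - 2 * Real.sqrt 8 := by
          rw [hdp, psi]; norm_num
        constructor
        · rw [hW, hwt, hcd, hpsi]; linarith
        · intro heq
          rw [hW, hwt, hcd, hpsi] at heq
          exfalso; linarith
    · -- deg v = 2 : chain, exact propagation
      obtain ⟨u, hchu⟩ := Finset.card_eq_one.mp (show (child T c v).card = 1 by omega)
      have humem : u ∈ child T c v := by rw [hchu]; exact Finset.mem_singleton_self u
      have hunec : u ≠ c := child_ne_root humem
      have hpu : par T c u = v := (mem_child.mp humem).2
      have hsum : ∑ x ∈ child T c v, Wsum T c x = Wsum T c u := by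
        rw [hchu, Finset.sum_singleton]
      have hcsum : ∑ x ∈ child T c v, (desc T c x).card = (desc T c u).card := by
        rw [hchu, Finset.sum_singleton]
      have hcu : (desc T c u).card ≤ m := by omega
      obtain ⟨ihineq, iheq⟩ := ih u hunec hcu
      rw [hpu, hd] at ihineq iheq
      have hpsi2 : psi ((2:ℕ) : ℝ) = Real.sqrt 8 + Real.sqrt 5 - 2 * Real.sqrt 8 := by
        rw [psi]; norm_num
      rw [hpsi2] at ihineq iheq
      have hwt : wt T c v =
          Real.sqrt (((deg T (par T c v) : ℝ))^2 + 4) := by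
        rw [wt, hd]
        rw [show ((2:ℕ):ℝ)^2 + ((deg T (par T c v) : ℕ):ℝ)^2
          = ((deg T (par T c v) : ℕ):ℝ)^2 + 4 by push_cast; ring]
      have hpsiv : psi ((deg T (par T c v) : ℝ)) =
          Real.sqrt (((deg T (par T c v) : ℝ))^2 + 4)
            + Real.sqrt 5 - 2 * Real.sqrt 8 := rfl
      have hcdv : ((desc T c v).card : ℝ) = 1 + ((desc T c u).card : ℝ) := by
        rw [hcr, hcsum]; push_cast; ring
      constructor
      · rw [hrec, hsum, hwt, hpsiv, hcdv]
        linarith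
      · intro heq
        rw [hrec, hsum, hwt, hpsiv, hcdv] at heq
        have hequ : Wsum T c u
            = Real.sqrt 8 * ((desc T c u).card : ℝ)
              + (Real.sqrt 8 + Real.sqrt 5 - 2 * Real.sqrt 8) := by
          linarith
        obtain ⟨hcl1, -⟩ := iheq hequ
        refine ⟨?_, fun _ => hd⟩
        intro w hw
        rw [desc_eq hc v, hchu] at hw
        simp only [Finset.mem_insert, Finset.singleton_biUnion] at hw
        rcases hw with rfl | hw
        · omega
        · exact hcl1 w hw
    · -- deg v = 3 : strict
      obtain ⟨a, b, hab, hchu⟩ := Finset.card_eq_two.mp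
        (show (child T c v).card = 2 by omega)
      have hamem : a ∈ child T c v := by rw [hchu]; simp
      have hbmem : b ∈ child T c v := by rw [hchu]; simp
      have hsum : ∑ x ∈ child T c v, Wsum T c x = Wsum T c a + Wsum T c b := by
        rw [hchu, Finset.sum_pair hab]
      have hcsum : ∑ x ∈ child T c v, (desc T c x).card
          = (desc T c a).card + (desc T c b).card := by
        rw [hchu, Finset.sum_pair hab]
      obtain ⟨ihina, -⟩ := ih a (child_ne_root hamem) (by omega)
      obtain ⟨ihinb, -⟩ := ih b (child_ne_root hbmem) (by omega)
      rw [(mem_child.mp hamem).2, hd] at ihina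
      rw [(mem_child.mp hbmem).2, hd] at ihinb
      have hpsi3 : psi ((3:ℕ) : ℝ) = Real.sqrt 13 + Real.sqrt 5 - 2 * Real.sqrt 8 := by
        rw [psi]; norm_num
      rw [hpsi3] at ihina ihinb
      have hcdv : ((desc T c v).card : ℝ)
          = 1 + ((desc T c a).card : ℝ) + ((desc T c b).card : ℝ) := by
        rw [hcr, hcsum]; push_cast; ring
      have hstrict : Real.sqrt 8 * ((desc T c v).card : ℝ)
          + psi ((deg T (par T c v) : ℝ)) < Wsum T c v := by
        rw [hrec, hsum, hcdv, psi]
        have hwt : wt T c v =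
            Real.sqrt (9 + ((deg T (par T c v) : ℝ))^2) := by
          rw [wt, hd]; norm_num
        rcases hdpcase with hdp | hdp | hdp
        · rw [hwt, hdp]; push_cast
          rw [show (9:ℝ) + 2^2 = 13 by norm_num, show (2:ℝ)^2 + 4 = 8 by norm_num]
          linarith
        · rw [hwt, hdp]; push_cast
          rw [show (9:ℝ) + 3^2 = 18 by norm_num, show (3:ℝ)^2 + 4 = 13 by norm_num]
          linarith
        · rw [hwt, hdp]; push_cast
          rw [show (9:ℝ) + 4^2 = 25 by norm_num, show (4:ℝ)^2 + 4 = 20 by norm_num,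
            s25]
          linarith
      exact ⟨le_of_lt hstrict, fun heq => absurd heq (by linarith)⟩
    · -- deg v = 4 : strict
      obtain ⟨a, b, e, hab, hae, hbe, hchu⟩ := Finset.card_eq_three.mp
        (show (child T c v).card = 3 by omega)
      have hamem : a ∈ child T c v := by rw [hchu]; simp
      have hbmem : b ∈ child T c v := by rw [hchu]; simp
      have hemem : e ∈ child T c v := by rw [hchu]; simp
      have hsum : ∑ x ∈ child T c v, Wsum T c x
          = Wsum T c a + Wsum T c b + Wsum T c e := by
        rw [hchu, Finset.sum_insert (by simp [hab, hae]),
          Finset.sum_pair hbe]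
        ring
      have hcsum : ∑ x ∈ child T c v, (desc T c x).card
          = (desc T c a).card + (desc T c b).card + (desc T c e).card := by
        rw [hchu, Finset.sum_insert (by simp [hab, hae]),
          Finset.sum_pair hbe]
        ring
      obtain ⟨ihina, -⟩ := ih a (child_ne_root hamem) (by omega)
      obtain ⟨ihinb, -⟩ := ih b (child_ne_root hbmem) (by omega)
      obtain ⟨ihine, -⟩ := ih e (child_ne_root hemem) (by omega)
      rw [(mem_child.mp hamem).2, hd] at ihina
      rw [(mem_child.mp hbmem).2, hd] at ihinb
      rw [(mem_child.mp hemem).2, hd] at ihine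
      have hpsi4 : psi ((4:ℕ) : ℝ) = Real.sqrt 20 + Real.sqrt 5 - 2 * Real.sqrt 8 := by
        rw [psi]; norm_num
      rw [hpsi4] at ihina ihinb ihine
      have hcdv : ((desc T c v).card : ℝ)
          = 1 + ((desc T c a).card : ℝ) + ((desc T c b).card : ℝ)
            + ((desc T c e).card : ℝ) := by
        rw [hcr, hcsum]; push_cast; ring
      have hstrict : Real.sqrt 8 * ((desc T c v).card : ℝ)
          + psi ((deg T (par T c v) : ℝ)) < Wsum T c v := by
        rw [hrec, hsum, hcdv, psi]
        have hwt : wt T c v =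
            Real.sqrt (16 + ((deg T (par T c v) : ℝ))^2) := by
          rw [wt, hd]; norm_num
        rcases hdpcase with hdp | hdp | hdp
        · rw [hwt, hdp]; push_cast
          rw [show (16:ℝ) + 2^2 = 20 by norm_num, show (2:ℝ)^2 + 4 = 8 by norm_num]
          linarith
        · rw [hwt, hdp]; push_cast
          rw [show (16:ℝ) + 3^2 = 25 by norm_num, show (3:ℝ)^2 + 4 = 13 by norm_num,
            s25]
          linarith
        · rw [hwt, hdp]; push_cast
          rw [show (16:ℝ) + 4^2 = 32 by norm_num, show (4:ℝ)^2 + 4 = 20 by norm_num]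
          linarith
      exact ⟨le_of_lt hstrict, fun heq => absurd heq (by linarith)⟩

lemma chain_val (hT : T.IsTree) :
    ∀ (m : ℕ) (v : V), v ≠ c → (desc T c v).card ≤ m →
      (∀ u ∈ desc T c v, deg T u ≤ 2) →
      (deg T v = 2 ∨ deg T (par T c v) = 2) →
      Wsum T c v = Real.sqrt 8 * (desc T c v).card + psi (deg T (par T c v)) := by
  have hc := hT.isConnected
  intro m
  induction m with
  | zero =>
    intro v hv hcard _ _
    have : 0 < (desc T c v).card := Finset.card_pos.mpr ⟨v, self_mem_desc v⟩
    omega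
  | succ m ih =>
    intro v hv hcard hall hdisj
    have hrec := Wsum_rec (c := c) hc hv
    have hcr := card_rec (c := c) hc v
    have hd1 : 1 ≤ deg T v := deg_pos hT hv
    have hd2 : deg T v ≤ 2 := hall v (self_mem_desc v)
    have hcc : (child T c v).card = deg T v - 1 := card_child hT hv
    rcases (show deg T v = 1 ∨ deg T v = 2 by omega) with hd | hd
    · -- leaf; parent has degree 2
      have hdp : deg T (par T c v) = 2 := by
        rcases hdisj with h | h
        · omega
        · exact h
      have hch : child T c v = ∅ := Finset.card_eq_zero.mp (by omega)
      have hW : Wsum T c v = wt T c v := by rw [hrec, hch]; simp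
      have hcd : ((desc T c v).card : ℝ) = 1 := by
        rw [desc_eq hc v, hch]; simp
      have hwt : wt T c v = Real.sqrt 5 := by rw [wt, hd, hdp]; norm_num
      have hpsi : psi ((deg T (par T c v) : ℝ)) =
          Real.sqrt 8 + Real.sqrt 5 - 2 * Real.sqrt 8 := by
        rw [hdp, psi]; norm_num
      rw [hW, hwt, hcd, hpsi]; ring
    · -- chain vertex
      obtain ⟨u, hchu⟩ := Finset.card_eq_one.mp (show (child T c v).card = 1 by omega)
      have humem : u ∈ child T c v := by rw [hchu]; exact Finset.mem_singleton_self u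
      have hunec : u ≠ c := child_ne_root humem
      have hpu : par T c u = v := (mem_child.mp humem).2
      have hsum : ∑ x ∈ child T c v, Wsum T c x = Wsum T c u := by
        rw [hchu, Finset.sum_singleton]
      have hcsum : ∑ x ∈ child T c v, (desc T c x).card = (desc T c u).card := by
        rw [hchu, Finset.sum_singleton]
      have hallu : ∀ w ∈ desc T c u, deg T w ≤ 2 := fun w hw =>
        hall w (desc_trans_child humem hw)
      have ihu := ih u hunec (by omega) hallu (Or.inr (by rw [hpu]; exact hd))
      rw [hpu, hd] at ihu
      have hpsi2 : psi ((2:ℕ) : ℝ) = Real.sqrt 8 + Real.sqrt 5 - 2 * Real.sqrt 8 := by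
        rw [psi]; norm_num
      rw [hpsi2] at ihu
      have hwt : wt T c v = Real.sqrt (((deg T (par T c v) : ℝ))^2 + 4) := by
        rw [wt, hd]
        rw [show ((2:ℕ):ℝ)^2 + ((deg T (par T c v) : ℕ):ℝ)^2
          = ((deg T (par T c v) : ℕ):ℝ)^2 + 4 by push_cast; ring]
      have hcdv : ((desc T c v).card : ℝ) = 1 + ((desc T c u).card : ℝ) := by
        rw [hcr, hcsum]; push_cast; ring
      rw [hrec, hsum, hwt, hcdv, ihu, psi]
      ring

lemma c_not_mem_desc (hu : u ∈ child T c c) : c ∉ desc T c u := by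
  intro h
  obtain ⟨k, hk⟩ := mem_desc.mp h
  rw [par_iter_root] at hk
  exact child_ne_root hu hk.symm

end SomborAux

open SomborAux in
/-- Corollary 1.1 (Δ = 4, corrected form): minimum Sombor index of chemical trees
with `n ≥ 7` vertices and maximum degree exactly `4` is
`4√20 + √8·(n - 9) + 4√5`; equality iff `T` is a spider with hub degree `4` and all
four legs of length at least `2`. -/
theorem stmt_17 {V : Type*} [Fintype V] (T : SimpleGraph V) (n : ℕ)
    (hT : T.IsTree) (hn : Fintype.card V = n) (h7 : 7 ≤ n)
    (hmax : maxDeg T = 4) :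
    somborIndex T
      ≥ 4 * Real.sqrt 20 + Real.sqrt 8 * ((n : ℝ) - 9) + 4 * Real.sqrt 5
    ∧ (somborIndex T
        = 4 * Real.sqrt 20 + Real.sqrt 8 * ((n : ℝ) - 9) + 4 * Real.sqrt 5
      ↔ ∃ c, deg T c = 4 ∧ (∀ v, v ≠ c → deg T v ≤ 2)
          ∧ ∀ v, T.Adj c v → deg T v = 2) := by
  classical
  have hne : Nonempty V := by
    rw [← Fintype.card_pos_iff]
    omega
  obtain ⟨c, -, hsup⟩ := Finset.exists_mem_eq_sup Finset.univ
    Finset.univ_nonempty (deg T)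
  have hc4 : deg T c = 4 := by
    rw [← hsup]
    exact hmax
  have hle : ∀ v, deg T v ≤ 4 := fun v => by
    have h := Finset.le_sup (f := deg T) (Finset.mem_univ v)
    rw [hsup] at h
    rw [← hc4]
    exact h
  have hcconn := hT.isConnected
  have hso := sombor_eq_children hT c
  have hchcard : (child T c c).card = 4 := by
    rw [card_child_root hT, hc4]
  have hcsum : 1 + ∑ u ∈ child T c c, (desc T c u).card = n := by
    rw [card_sum_children hcconn, hn]
  -- per-child lower bound
  have hpsi4 : psi ((4:ℕ) : ℝ) = Real.sqrt 20 + Real.sqrt 5 - 2 * Real.sqrt 8 := by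
    rw [psi]; norm_num
  set B : V → ℝ := fun u => Real.sqrt 8 * ((desc T c u).card : ℝ)
    + (Real.sqrt 20 + Real.sqrt 5 - 2 * Real.sqrt 8) with hB
  have hparc : ∀ u ∈ child T c c, par T c u = c := fun u hu => (mem_child.mp hu).2
  have hBle : ∀ u ∈ child T c c, B u ≤ Wsum T c u := by
    intro u hu
    have h := (main_ind hT hc4 hle (desc T c u).card u (child_ne_root hu) le_rfl).1
    rw [hparc u hu, hc4, hpsi4] at h
    exact h
  have hBeq : ∀ u ∈ child T c c, B u = Wsum T c u →
      (∀ w ∈ desc T c u, deg T w ≤ 2) ∧ deg T u = 2 := by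
    intro u hu heq
    have h := (main_ind hT hc4 hle (desc T c u).card u (child_ne_root hu) le_rfl).2
    rw [hparc u hu, hc4, hpsi4] at h
    obtain ⟨h1, h2⟩ := h heq.symm
    exact ⟨h1, h2 rfl⟩
  have hsumB : ∑ u ∈ child T c c, B u
      = 4 * Real.sqrt 20 + Real.sqrt 8 * ((n : ℝ) - 9) + 4 * Real.sqrt 5 := by
    rw [hB]
    rw [Finset.sum_add_distrib, ← Finset.mul_sum, Finset.sum_const, hchcard]
    have : (∑ u ∈ child T c c, ((desc T c u).card : ℝ)) = (n : ℝ) - 1 := by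
      have := hcsum
      push_cast [← this]
      ring
    rw [this]
    push_cast
    ring
  have hineq : somborIndex T
      ≥ 4 * Real.sqrt 20 + Real.sqrt 8 * ((n : ℝ) - 9) + 4 * Real.sqrt 5 := by
    rw [hso, ← hsumB]
    exact Finset.sum_le_sum hBle
  refine ⟨hineq, ?_, ?_⟩
  · -- equality → spider
    intro heq
    have hsums : ∑ u ∈ child T c c, B u = ∑ u ∈ child T c c, Wsum T c u := by
      rw [hsumB, ← hso, heq]
    have hall := (Finset.sum_eq_sum_iff_of_le hBle).mp hsums
    refine ⟨c, hc4, ?_, ?_⟩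
    · intro v hvne
      have hv : v ∈ Finset.univ.erase c := Finset.mem_erase.mpr ⟨hvne, Finset.mem_univ v⟩
      rw [erase_eq_biUnion hcconn] at hv
      obtain ⟨u, hu, hdu⟩ := Finset.mem_biUnion.mp hv
      exact (hBeq u hu (hall u hu)).1 v hdu
    · intro v hadj
      have hv : v ∈ child T c c := by
        rw [child_root_eq hT]
        simp [hadj]
      exact (hBeq v hv (hall v hv)).2
  · -- spider → equality
    rintro ⟨c', h4', hle2, hadj2⟩
    have hcc' : c = c' := by
      by_contra hne'
      have := hle2 c hne'
      omega
    subst hcc'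
    have hWeq : ∀ u ∈ child T c c, Wsum T c u = B u := by
      intro u hu
      have hadjc : T.Adj c u := (mem_child.mp hu).1
      have hdu : deg T u = 2 := hadj2 u hadjc
      have hallu : ∀ w ∈ desc T c u, deg T w ≤ 2 := by
        intro w hw
        have hwne : w ≠ c := by
          intro h'; subst h'
          exact c_not_mem_desc hu hw
        rw [← hdu]
        have := hle2 w hwne
        omega
      have h := chain_val hT (desc T c u).card u (child_ne_root hu) le_rfl hallu
        (Or.inl hdu)
      rw [hparc u hu, hc4, hpsi4] at h
      rw [h, hB]
    rw [hso, Finset.sum_congr rfl hWeq, hsumB]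
end

section
/- Let U be a unicyclic graph on n ≥ 5 vertices with maximum degree Δ, where ⌊(n+1)/2⌋ < Δ ≤ n − 2. Then SO(U) ≥ (n − Δ + 1)·√(Δ² + 4) + (2Δ − n − 1)·√(Δ² + 1) + √5·(n − Δ − 1) + √8, with equality if and only if U ≅ U_{n,Δ}, the graph obtained by attaching 2Δ − n + 1 pendant vertices and n − Δ − 1 paths of length 2 to one vertex of a triangle. -/
open scoped Classical

open Real Finset

noncomputable def phi (d : ℕ) : ℝ := if d = 1 then √5 - √2 else d * √2 / 2

noncomputable def lam (D : ℕ) : ℝ := √((D:ℝ)^2 + 4) - √((D:ℝ)^2 + 1) + √2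

lemma lam_le (D : ℕ) (hD : 2 ≤ D) : lam D ≤ 3 * √2 / 2 := by
  have h1 : √((D:ℝ)^2 + 4) ≤ √((D:ℝ)^2 + 1) + √2 / 2 := by
    rw [Real.sqrt_le_iff]
    refine ⟨by positivity, ?_⟩
    have h2 : (5:ℝ)/2 ≤ √2 * √((D:ℝ)^2+1) := by
      rw [← Real.sqrt_mul (by norm_num)]
      rw [show (5:ℝ)/2 = √((5/2)^2) by rw [Real.sqrt_sq]; norm_num]
      apply Real.sqrt_le_sqrt
      have : (2:ℝ) ≤ (D:ℝ) := by exact_mod_cast hD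
      nlinarith
    have h3 : √((D:ℝ)^2+1) ^ 2 = (D:ℝ)^2+1 := Real.sq_sqrt (by positivity)
    have h4 : √2 ^ 2 = 2 := Real.sq_sqrt (by norm_num)
    nlinarith
  unfold lam; nlinarith [h1]

lemma lam_pos (D : ℕ) : 0 < lam D := by
  unfold lam
  have : √((D:ℝ)^2+1) ≤ √((D:ℝ)^2+4) := Real.sqrt_le_sqrt (by norm_num)
  have : 0 < √2 := Real.sqrt_pos.2 (by norm_num)
  linarith

-- vertex N lemma
lemma vertexN (D d : ℕ) (hD : 2 ≤ D) (hd : 1 ≤ d) :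
    √((D:ℝ)^2+1) + ((d:ℝ)-1) * lam D ≤ √((D:ℝ)^2+(d:ℝ)^2) + ((d:ℝ)-1) * phi d := by
  match d, hd with
  | 1, _ => norm_num
  | 2, _ =>
      rw [phi, if_neg (by norm_num), lam]; push_cast; ring_nf
      apply le_of_eq; ring
  | (k+3), _ =>
      have hd3 : (3:ℝ) ≤ ((k+3:ℕ):ℝ) := by push_cast; linarith [Nat.cast_nonneg (α := ℝ) k]
      set d' : ℕ := k+3
      have h1 : lam D ≤ 3*√2/2 := lam_le D hD
      have h2 : √((D:ℝ)^2+1) ≤ √((D:ℝ)^2+(d':ℝ)^2) := Real.sqrt_le_sqrt (by nlinarith)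
      rw [phi, if_neg (by omega)]
      have h3 : ((d':ℝ)-1) * lam D ≤ ((d':ℝ)-1) * (3*√2/2) :=
        mul_le_mul_of_nonneg_left h1 (by linarith)
      have h4 : ((d':ℝ)-1) * (3*√2/2) ≤ ((d':ℝ)-1) * ((d':ℝ) * √2/2) := by
        apply mul_le_mul_of_nonneg_left _ (by linarith)
        have : 0 ≤ √2 := Real.sqrt_nonneg _
        nlinarith
      linarith

lemma vertexN_strict (D d : ℕ) (hD : 2 ≤ D) (hd : 3 ≤ d) :
    √((D:ℝ)^2+1) + ((d:ℝ)-1) * lam D < √((D:ℝ)^2+(d:ℝ)^2) + ((d:ℝ)-1) * phi d := by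
  have hd3 : (3:ℝ) ≤ (d:ℝ) := by exact_mod_cast hd
  have h1 : lam D ≤ 3*√2/2 := lam_le D hD
  have h2 : √((D:ℝ)^2+1) < √((D:ℝ)^2+(d:ℝ)^2) := Real.sqrt_lt_sqrt (by positivity) (by nlinarith)
  rw [phi, if_neg (by omega)]
  have h3 : ((d:ℝ)-1) * lam D ≤ ((d:ℝ)-1) * (3*√2/2) :=
    mul_le_mul_of_nonneg_left h1 (by linarith)
  have h4 : ((d:ℝ)-1) * (3*√2/2) ≤ ((d:ℝ)-1) * ((d:ℝ) * √2/2) := by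
    apply mul_le_mul_of_nonneg_left _ (by linarith)
    have : 0 ≤ √2 := Real.sqrt_nonneg _
    nlinarith
  linarith

-- vertex O lemma
lemma vertexO_strict (D d : ℕ) (hD : 4 ≤ D) (hd : 2 ≤ d) :
    (√5 - √2) + ((d:ℝ)-1) * lam D < (d:ℝ) * phi d := by
  have hDr : (4:ℝ) ≤ (D:ℝ) := by exact_mod_cast hD
  have h2 : √2 ^ 2 = 2 := Real.sq_sqrt (by norm_num)
  have h5 : √5 ^ 2 = 5 := Real.sq_sqrt (by norm_num)
  have hs2 : 0 ≤ √2 := Real.sqrt_nonneg _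
  have hs5 : 0 ≤ √5 := Real.sqrt_nonneg _
  match d, hd with
  | 2, _ =>
    rw [phi, if_neg (by norm_num), lam]
    push_cast
    have key : √((D:ℝ)^2 + 4) ≤ √((D:ℝ)^2 + 1) + 1/2 := by
      rw [Real.sqrt_le_iff]
      refine ⟨by positivity, ?_⟩
      have h3 : √((D:ℝ)^2+1) ^ 2 = (D:ℝ)^2+1 := Real.sq_sqrt (by positivity)
      have h6 : (11:ℝ)/4 ≤ √((D:ℝ)^2+1) := by
        rw [show (11:ℝ)/4 = √((11/4)^2) by rw [Real.sqrt_sq]; norm_num]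
        apply Real.sqrt_le_sqrt; nlinarith
      nlinarith
    have h7 : √5 < 2*√2 - 1/2 := by
      have h12 : √5 < √(27/5) := Real.sqrt_lt_sqrt (by norm_num) (by norm_num)
      have hs2lt : √2 < 1.425 := (Real.sqrt_lt' (by norm_num)).2 (by norm_num)
      have hs2gt : (1.4:ℝ) < √2 := Real.lt_sqrt_of_sq_lt (by norm_num)
      have h8 : √(27/5) ≤ 2*√2 - 1/2 := by
        rw [Real.sqrt_le_iff]
        refine ⟨by nlinarith, by nlinarith⟩
      linarith
    nlinarith
  | (k+3), _ =>
    have hd3 : (3:ℝ) ≤ ((k+3:ℕ):ℝ) := by push_cast; linarith [Nat.cast_nonneg (α := ℝ) k]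
    set d' : ℕ := k+3
    have h1 : lam D ≤ 3*√2/2 := lam_le D (by omega)
    rw [phi, if_neg (by omega)]
    have h3 : ((d':ℝ)-1) * lam D ≤ ((d':ℝ)-1) * (3*√2/2) :=
      mul_le_mul_of_nonneg_left h1 (by linarith)
    have h9 : √5 < 5*√2/2 := by
      have h13 : √5 < √(25/2) := Real.sqrt_lt_sqrt (by norm_num) (by norm_num)
      have h10 : √(25/2) = 5*√2/2 := by
        rw [show (25:ℝ)/2 = (5/2)^2*2 by norm_num, Real.sqrt_mul (by positivity), Real.sqrt_sq (by norm_num)]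
        ring
      linarith
    have h11 : 3*(d':ℝ)*√2/2 ≤ (d':ℝ) * ((d':ℝ)*√2/2) := by
      nlinarith [mul_nonneg (mul_nonneg (by linarith : (0:ℝ) ≤ (d':ℝ)-3) (by linarith : (0:ℝ) ≤ (d':ℝ))) hs2]
    nlinarith



lemma vertexO (D d : ℕ) (hD : 4 ≤ D) (hd : 1 ≤ d) :
    (√5 - √2) + ((d:ℝ)-1) * lam D ≤ (d:ℝ) * phi d := by
  match d, hd with
  | 1, _ => rw [phi, if_pos rfl]; norm_num
  | (k+2), _ => exact le_of_lt (by
      have : 2 ≤ k+2 := by omega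
      exact vertexO_strict D (k+2) hD this)




lemma edge_case22 (a b : ℕ) (ha : 2 ≤ a) (hb : 2 ≤ b) :
    phi a + phi b ≤ √((a:ℝ)^2 + (b:ℝ)^2) := by
  have ha' : (2:ℝ) ≤ a := by exact_mod_cast ha
  have hb' : (2:ℝ) ≤ b := by exact_mod_cast hb
  rw [phi, phi, if_neg (by omega), if_neg (by omega)]
  rw [show (a:ℝ) * √2/2 + (b:ℝ)*√2/2 = ((a:ℝ)+b)*√2/2 by ring]
  apply Real.le_sqrt_of_sq_le
  have h4 : √2 ^ 2 = 2 := Real.sq_sqrt (by norm_num)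
  nlinarith [sq_nonneg ((a:ℝ) - b)]

lemma edge_case12 (b : ℕ) (hb : 2 ≤ b) :
    phi 1 + phi b ≤ √((1:ℝ)^2 + (b:ℝ)^2) := by
  have hb' : (2:ℝ) ≤ b := by exact_mod_cast hb
  rw [phi, phi, if_pos rfl, if_neg (by omega)]
  rw [show (1:ℝ)^2 + (b:ℝ)^2 = 1 + (b:ℝ)^2 by ring]
  set s2 := √2
  set s5 := √5
  set sb := √(1 + (b:ℝ)^2) with hsbdef
  have h2 : s2^2 = 2 := Real.sq_sqrt (by norm_num)
  have h5 : s5^2 = 5 := Real.sq_sqrt (by norm_num)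
  have hb2 : sb^2 = 1 + (b:ℝ)^2 := Real.sq_sqrt (by positivity)
  have hs2 : 0 ≤ s2 := Real.sqrt_nonneg _
  have hs5 : 0 ≤ s5 := Real.sqrt_nonneg _
  have hsb : 0 ≤ sb := Real.sqrt_nonneg _
  have hub : sb ≤ s2 * b := by
    rw [hsbdef, show s2 * (b:ℝ) = √(2 * (b:ℝ)^2) by
      rw [Real.sqrt_mul (by norm_num), Real.sqrt_sq (by positivity)]]
    apply Real.sqrt_le_sqrt; nlinarith
  have hu5 : s5 ≤ 2 * s2 := by
    rw [show (2:ℝ) * s2 = √8 by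
      rw [show (8:ℝ) = 2^2*2 by norm_num, Real.sqrt_mul (by positivity), Real.sqrt_sq (by norm_num)]]
    apply Real.sqrt_le_sqrt; norm_num
  have hlb : s5 ≤ sb := by rw [hsbdef]; apply Real.sqrt_le_sqrt; nlinarith
  have key : (b:ℝ)^2 - 4 ≤ (sb - s5) * (s2 * ((b:ℝ) + 2)) := by
    have h := mul_le_mul_of_nonneg_left (add_le_add hub hu5) (sub_nonneg.2 hlb)
    nlinarith [h]
  nlinarith [key, mul_pos (Real.sqrt_pos.2 (by norm_num : (0:ℝ) < 2)) (by linarith : (0:ℝ) < (b:ℝ)+2)]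

lemma edge_ineq (a b : ℕ) (ha : 1 ≤ a) (hb : 1 ≤ b) (h : ¬(a = 1 ∧ b = 1)) :
    phi a + phi b ≤ √((a:ℝ)^2 + (b:ℝ)^2) := by
  rcases Nat.lt_or_ge a 2 with ha2 | ha2
  · have ha1 : a = 1 := by omega
    have hb2 : 2 ≤ b := by omega
    subst ha1
    exact_mod_cast edge_case12 b hb2
  · rcases Nat.lt_or_ge b 2 with hb2 | hb2
    · have hb1 : b = 1 := by omega
      subst hb1
      rw [add_comm (phi a), add_comm ((a:ℝ)^2)]
      exact_mod_cast edge_case12 a ha2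
    · exact edge_case22 a b ha2 hb2

lemma edge_eq12 : phi 1 + phi 2 = √((1:ℝ)^2 + (2:ℝ)^2) := by
  rw [phi, phi, if_pos rfl, if_neg (by norm_num)]
  rw [show (1:ℝ)^2 + (2:ℝ)^2 = 5 by norm_num]
  push_cast; ring

lemma edge_eq22 : phi 2 + phi 2 = √((2:ℝ)^2 + (2:ℝ)^2) := by
  rw [phi, if_neg (by norm_num)]
  rw [show (2:ℝ)^2 + (2:ℝ)^2 = 2^2*2 by norm_num, Real.sqrt_mul (by positivity),
    Real.sqrt_sq (by norm_num)]
  push_cast; ring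

lemma sqrt8_eq' : √8 = 2 * √2 := by
  rw [show (8:ℝ) = 2^2 * 2 by norm_num, Real.sqrt_mul (by positivity), Real.sqrt_sq (by norm_num)]

section GraphAux

variable {V : Type*} [Fintype V] (U : SimpleGraph V) (c : V)

noncomputable def edeg (u : V) : ℕ := ((Finset.univ.erase c).filter (fun v => U.Adj u v)).card

lemma em_adj {u : V} (h : U.Adj u c) : edeg U c u + 1 = deg U u := by
  unfold edeg deg
  rw [Finset.filter_erase, Finset.card_erase_of_mem (by simp [h])]
  have : 0 < (Finset.univ.filter (fun v => U.Adj u v)).card := Finset.card_pos.2 ⟨c, by simp [h]⟩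
  omega

lemma em_nadj {u : V} (h : ¬ U.Adj u c) : edeg U c u = deg U u := by
  unfold edeg deg
  rw [Finset.filter_erase, Finset.erase_eq_of_notMem (by simp [h])]

lemma SO_decomp : somborIndex U =
    (∑ v ∈ Finset.univ.erase c,
      if U.Adj c v then √((deg U c:ℝ)^2 + (deg U v:ℝ)^2) else 0)
    + (1/2) * ∑ u ∈ Finset.univ.erase c, ∑ v ∈ Finset.univ.erase c,
        (if U.Adj u v then √((deg U u:ℝ)^2+(deg U v:ℝ)^2) else 0) := by
  unfold somborIndex
  rw [← Finset.add_sum_erase _ _ (Finset.mem_univ c)]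
  have h1 : ∑ v : V, (if U.Adj c v then √((deg U c:ℝ)^2 + (deg U v:ℝ)^2) else 0)
      = ∑ v ∈ Finset.univ.erase c, (if U.Adj c v then √((deg U c:ℝ)^2 + (deg U v:ℝ)^2) else 0) := by
    rw [← Finset.add_sum_erase _ _ (Finset.mem_univ c), if_neg (U.irrefl), zero_add]
  have h2 : ∀ u ∈ Finset.univ.erase c,
      (∑ v : V, if U.Adj u v then √((deg U u:ℝ)^2 + (deg U v:ℝ)^2) else 0)
      = (if U.Adj c u then √((deg U c:ℝ)^2 + (deg U u:ℝ)^2) else 0)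
        + ∑ v ∈ Finset.univ.erase c, (if U.Adj u v then √((deg U u:ℝ)^2 + (deg U v:ℝ)^2) else 0) := by
    intro u _
    rw [← Finset.add_sum_erase _ _ (Finset.mem_univ c)]
    congr 1
    rw [U.adj_comm u c]
    by_cases h : U.Adj c u
    · rw [if_pos h, if_pos h, add_comm ((deg U u:ℝ)^2)]
    · rw [if_neg h, if_neg h]
  rw [Finset.sum_congr rfl h2, Finset.sum_add_distrib, h1]
  ring

lemma Q_phi (f : ℕ → ℝ) :
    (∑ u ∈ Finset.univ.erase c, ∑ v ∈ Finset.univ.erase c,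
      (if U.Adj u v then f (deg U u) + f (deg U v) else 0))
    = 2 * ∑ u ∈ Finset.univ.erase c, (edeg U c u : ℝ) * f (deg U u) := by
  have key : ∀ (g : V → ℝ), (∑ u ∈ Finset.univ.erase c, ∑ v ∈ Finset.univ.erase c,
      (if U.Adj u v then g u else 0)) = ∑ u ∈ Finset.univ.erase c, (edeg U c u : ℝ) * g u := by
    intro g
    refine Finset.sum_congr rfl fun u _ => ?_
    rw [← Finset.sum_filter]
    rw [Finset.sum_const]
    unfold edeg
    simp [mul_comm]
  have split : ∀ u v : V, (if U.Adj u v then f (deg U u) + f (deg U v) else 0)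
      = (if U.Adj u v then f (deg U u) else 0) + (if U.Adj u v then f (deg U v) else 0) := by
    intro u v; by_cases h : U.Adj u v <;> simp [h]
  simp_rw [split, Finset.sum_add_distrib]
  rw [key]
  have h3 : (∑ u ∈ Finset.univ.erase c, ∑ v ∈ Finset.univ.erase c,
      (if U.Adj u v then f (deg U v) else 0)) = ∑ u ∈ Finset.univ.erase c, (edeg U c u : ℝ) * f (deg U u) := by
    rw [Finset.sum_comm]
    rw [← key]
    refine Finset.sum_congr rfl fun v _ => Finset.sum_congr rfl fun u _ => ?_
    rw [U.adj_comm]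
  rw [h3]; ring

lemma deg_eq_sum (u : V) : deg U u = ∑ v : V, if U.Adj u v then 1 else 0 := by
  rw [deg, Finset.card_filter]

lemma edeg_eq_sum (u : V) :
    edeg U c u = ∑ v ∈ Finset.univ.erase c, if U.Adj u v then 1 else 0 := by
  rw [edeg, Finset.card_filter]

lemma card_filter_adj : ((Finset.univ.erase c).filter (fun u => U.Adj c u)).card = deg U c := by
  rw [Finset.filter_erase, Finset.erase_eq_of_notMem (by simp [U.irrefl]), deg]

lemma card_filter_nadj :
    ((Finset.univ.erase c).filter (fun u => ¬ U.Adj c u)).card + deg U c + 1 = Fintype.card V := by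
  have h := Finset.card_filter_add_card_filter_not (s := Finset.univ.erase c)
    (p := fun u => U.Adj c u)
  rw [card_filter_adj] at h
  rw [Finset.card_erase_of_mem (Finset.mem_univ c), Finset.card_univ] at h
  have : 1 ≤ Fintype.card V := Fintype.card_pos_iff.2 ⟨c⟩
  omega

lemma sum_deg_erase (hhs : (∑ u : V, deg U u) = 2 * Fintype.card V) :
    ∑ u ∈ Finset.univ.erase c, deg U u + deg U c = 2 * Fintype.card V := by
  rw [← hhs, ← Finset.add_sum_erase _ _ (Finset.mem_univ c)]
  ring

lemma sum_edeg (hhs : (∑ u : V, deg U u) = 2 * Fintype.card V) :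
    ∑ u ∈ Finset.univ.erase c, edeg U c u + 2 * deg U c = 2 * Fintype.card V := by
  have h1 : ∀ u ∈ Finset.univ.erase c, deg U u = edeg U c u + (if U.Adj u c then 1 else 0) := by
    intro u _
    rw [deg_eq_sum, edeg_eq_sum, ← Finset.add_sum_erase _ _ (Finset.mem_univ c)]
    ring
  have h2 := sum_deg_erase U c hhs
  rw [Finset.sum_congr rfl h1, Finset.sum_add_distrib] at h2
  have h3 : ∑ u ∈ Finset.univ.erase c, (if U.Adj u c then (1:ℕ) else 0) = deg U c := by
    rw [← Finset.card_filter]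
    rw [Finset.filter_congr (fun u _ => by rw [U.adj_comm] : ∀ u ∈ Finset.univ.erase c, U.Adj u c ↔ U.Adj c u)]
    exact card_filter_adj U c
  rw [h3] at h2
  omega

lemma sum_g (n Δ : ℕ) (hn : Fintype.card V = n) (hc : deg U c = Δ) (hΔn : Δ + 2 ≤ n)
    (hhs : (∑ u : V, deg U u) = 2 * Fintype.card V) :
    ∑ u ∈ Finset.univ.erase c,
      ((if U.Adj c u then √((Δ:ℝ)^2+1) else (√5-√2)) + ((deg U u:ℝ)-1) * lam Δ)
    = ((n:ℝ)-Δ+1) * √((Δ:ℝ)^2+4) + (2*(Δ:ℝ)-(n:ℝ)-1) * √((Δ:ℝ)^2+1)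
      + √5 * ((n:ℝ)-Δ-1) + √8 := by
  rw [Finset.sum_add_distrib]
  have h1 : ∑ u ∈ Finset.univ.erase c,
      (if U.Adj c u then √((Δ:ℝ)^2+1) else (√5-√2))
      = (Δ:ℝ) * √((Δ:ℝ)^2+1) + ((n:ℝ)-1-Δ) * (√5-√2) := by
    rw [Finset.sum_ite, Finset.sum_const, Finset.sum_const, card_filter_adj, hc]
    have h2 := card_filter_nadj U c
    rw [hc, hn] at h2
    have h3 : (((Finset.univ.erase c).filter (fun u => ¬ U.Adj c u)).card : ℝ)
        = (n:ℝ) - 1 - Δ := by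
      have h9 := congrArg (Nat.cast : ℕ → ℝ) h2
      push_cast at h9
      linarith
    simp only [nsmul_eq_mul]
    rw [h3]
  have h4 : ∑ u ∈ Finset.univ.erase c, ((deg U u:ℝ)-1) * lam Δ
      = ((n:ℝ) - Δ + 1) * lam Δ := by
    rw [← Finset.sum_mul]
    congr 1
    have h5 := sum_deg_erase U c hhs
    rw [hc, hn] at h5
    have h6 : ∑ u ∈ Finset.univ.erase c, ((deg U u : ℝ)) = 2*(n:ℝ) - Δ := by
      have h9 := congrArg (Nat.cast : ℕ → ℝ) h5
      push_cast at h9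
      linarith
    have hcard : (((Finset.univ.erase c).card : ℕ) : ℝ) = (n:ℝ) - 1 := by
      rw [Finset.card_erase_of_mem (Finset.mem_univ c), Finset.card_univ, hn]
      have h9 : (1:ℕ) ≤ n := by omega
      push_cast [Nat.cast_sub h9]
      ring
    rw [Finset.sum_sub_distrib, Finset.sum_const, nsmul_eq_mul, hcard, h6]
    ring
  rw [h1, h4, lam, sqrt8_eq']
  ring

end GraphAux

section ConnAux

variable {V : Type*} [Fintype V] {U : SimpleGraph V}

lemma deg_pos (hc : U.Connected) (h2 : 2 ≤ Fintype.card V) (v : V) : 1 ≤ deg U v := by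
  obtain ⟨w, hw⟩ := Fintype.exists_ne_of_one_lt_card (by omega) v
  obtain ⟨p⟩ := hc v w
  have hnil : ¬ p.Nil := SimpleGraph.Walk.not_nil_of_ne (Ne.symm hw)
  obtain ⟨x, hadj, q, -⟩ := (SimpleGraph.Walk.not_nil_iff).1 hnil
  exact Finset.card_pos.2 ⟨x, by simp [hadj]⟩

lemma exists_adj (hc : U.Connected) (h2 : 2 ≤ Fintype.card V) (v : V) : ∃ w, U.Adj v w := by
  have := deg_pos hc h2 v
  rw [deg] at this
  obtain ⟨w, hw⟩ := Finset.card_pos.1 this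
  exact ⟨w, (Finset.mem_filter.1 hw).2⟩

lemma adj_uniq {u v w : V} (hdeg : deg U u = 1) (hv : U.Adj u v) (hw : U.Adj u w) : w = v := by
  have h1 : v ∈ Finset.univ.filter (fun x => U.Adj u x) := by simp [hv]
  have h2 : w ∈ Finset.univ.filter (fun x => U.Adj u x) := by simp [hw]
  exact Finset.card_le_one.1 (le_of_eq hdeg) _ h2 _ h1

lemma no_adj_leaves_s19 (hc : U.Connected) {c u v : V} (hcdeg : deg U c ≠ 1)
    (huv : U.Adj u v) (hu : deg U u = 1) (hv : deg U v = 1) : False := by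
  have hcu : c ≠ u := fun h => hcdeg (h ▸ hu)
  have hcv : c ≠ v := fun h => hcdeg (h ▸ hv)
  obtain ⟨p0⟩ := hc u c
  have key : ∀ (x : V) (p : U.Walk x c), (x = u ∨ x = v) → False := by
    intro x p
    induction p with
    | nil => rintro (rfl | rfl) <;> [exact hcu rfl; exact hcv rfl]
    | cons h q ih =>
        rintro (rfl | rfl)
        · exact ih hcdeg hcu hcv p0 (Or.inr (adj_uniq hu huv h))
        · exact ih hcdeg hcu hcv p0 (Or.inl (adj_uniq hv huv.symm h))
  exact key u p0 (Or.inl rfl)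

end ConnAux
/-- Theorem 1.2(ii): minimum Sombor index of unicyclic graphs with `n ≥ 5` vertices
and maximum degree `Δ`, for `⌊(n+1)/2⌋ < Δ ≤ n - 2`; equality holds iff `U ≅ U_{n,Δ}`,
i.e. `U` has a vertex `c` of degree `Δ` lying on a triangle, all other vertices of
degree at most `2`, and every vertex within distance `2` of `c`. -/
theorem stmt_19 {V : Type*} [Fintype V] (U : SimpleGraph V) (n Δ : ℕ)
    (hU : IsUnicyclic U) (hn : Fintype.card V = n) (h5 : 5 ≤ n)
    (hmax : maxDeg U = Δ) (hΔ1 : (n + 1) / 2 < Δ) (hΔ2 : Δ ≤ n - 2) :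
    somborIndex U
      ≥ ((n : ℝ) - Δ + 1) * Real.sqrt ((Δ : ℝ) ^ 2 + 4)
        + (2 * (Δ : ℝ) - n - 1) * Real.sqrt ((Δ : ℝ) ^ 2 + 1)
        + Real.sqrt 5 * ((n : ℝ) - Δ - 1) + Real.sqrt 8
    ∧ (somborIndex U
        = ((n : ℝ) - Δ + 1) * Real.sqrt ((Δ : ℝ) ^ 2 + 4)
          + (2 * (Δ : ℝ) - n - 1) * Real.sqrt ((Δ : ℝ) ^ 2 + 1)
          + Real.sqrt 5 * ((n : ℝ) - Δ - 1) + Real.sqrt 8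
      ↔ ∃ c a b, deg U c = Δ ∧ (∀ v, v ≠ c → deg U v ≤ 2)
          ∧ U.Adj c a ∧ U.Adj c b ∧ U.Adj a b ∧ ∀ v, U.dist c v ≤ 2) := by
  obtain ⟨hconn, hhs⟩ := hU
  have h2card : 2 ≤ Fintype.card V := by omega
  have hΔ4 : 4 ≤ Δ := by omega
  have hΔn : Δ + 2 ≤ n := by omega
  have hdeg1 : ∀ v, 1 ≤ deg U v := deg_pos hconn h2card
  set Bv : ℝ := ((n : ℝ) - Δ + 1) * Real.sqrt ((Δ : ℝ) ^ 2 + 4)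
        + (2 * (Δ : ℝ) - n - 1) * Real.sqrt ((Δ : ℝ) ^ 2 + 1)
        + Real.sqrt 5 * ((n : ℝ) - Δ - 1) + Real.sqrt 8 with hBv
  set Tl : V → V → ℝ := fun w u =>
    (if U.Adj w u then √((Δ:ℝ)^2+(deg U u:ℝ)^2) else 0) + (edeg U w u : ℝ) * phi (deg U u)
    with hTl
  set g : V → V → ℝ := fun w u =>
    (if U.Adj w u then √((Δ:ℝ)^2+1) else (√5-√2)) + ((deg U u:ℝ)-1) * lam Δ with hg
  -- no two adjacent leaves
  have hnoleaf : ∀ w, deg U w = Δ → ∀ u v : V, U.Adj u v → ¬(deg U u = 1 ∧ deg U v = 1) := by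
    intro w hw u v huv ⟨h1, h2⟩
    exact no_adj_leaves_s19 hconn (c := w) (by omega) huv h1 h2
  -- main decomposition lower bound
  have hSOge : ∀ w, deg U w = Δ → ∑ u ∈ Finset.univ.erase w, Tl w u ≤ somborIndex U := by
    intro w hw
    rw [SO_decomp U w, hw]
    have hQ : (∑ u ∈ Finset.univ.erase w, ∑ v ∈ Finset.univ.erase w,
        (if U.Adj u v then phi (deg U u) + phi (deg U v) else 0))
        ≤ ∑ u ∈ Finset.univ.erase w, ∑ v ∈ Finset.univ.erase w,
          (if U.Adj u v then √((deg U u:ℝ)^2+(deg U v:ℝ)^2) else 0) := by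
      refine Finset.sum_le_sum fun u _ => Finset.sum_le_sum fun v _ => ?_
      by_cases h : U.Adj u v
      · rw [if_pos h, if_pos h]
        exact edge_ineq _ _ (hdeg1 u) (hdeg1 v) (hnoleaf w hw u v h)
      · rw [if_neg h, if_neg h]
    have hQphi := Q_phi U w (phi)
    rw [hQphi] at hQ
    simp only [hTl]
    rw [Finset.sum_add_distrib]
    have h2' : ∑ u ∈ Finset.univ.erase w, (edeg U w u : ℝ) * phi (deg U u)
        ≤ (1/2) * ∑ u ∈ Finset.univ.erase w, ∑ v ∈ Finset.univ.erase w,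
          (if U.Adj u v then √((deg U u:ℝ)^2+(deg U v:ℝ)^2) else 0) := by
      linarith
    linarith
  -- pointwise bound
  have hTg : ∀ w, deg U w = Δ → ∀ u, u ≠ w → g w u ≤ Tl w u := by
    intro w hw u hu
    simp only [hTl, hg]
    by_cases h : U.Adj w u
    · rw [if_pos h, if_pos h]
      have hme : edeg U w u + 1 = deg U u := em_adj U w (h.symm)
      have hcast : (edeg U w u : ℝ) = (deg U u : ℝ) - 1 := by
        have := congrArg (Nat.cast : ℕ → ℝ) hme; push_cast at this; linarith
      rw [hcast]
      exact vertexN Δ (deg U u) (by omega) (hdeg1 u)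
    · rw [if_neg h, if_neg h]
      have hme : edeg U w u = deg U u := em_nadj U w (fun hh => h hh.symm)
      rw [hme, zero_add]
      exact vertexO Δ (deg U u) hΔ4 (hdeg1 u)
  have hsumg : ∀ w, deg U w = Δ → ∑ u ∈ Finset.univ.erase w, g w u = Bv := by
    intro w hw
    simp only [hg]
    rw [sum_g U w n Δ hn hw hΔn hhs, hBv]
  -- max degree attained
  have hne : (Finset.univ : Finset V).Nonempty := by
    rw [← Finset.card_pos, Finset.card_univ]; omega
  obtain ⟨c, -, hcsup⟩ := Finset.exists_mem_eq_sup (Finset.univ : Finset V) hne (deg U)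
  have hc : deg U c = Δ := by rw [← hmax, maxDeg, hcsup]
  have hge : somborIndex U ≥ Bv := by
    calc somborIndex U ≥ ∑ u ∈ Finset.univ.erase c, Tl c u := hSOge c hc
    _ ≥ ∑ u ∈ Finset.univ.erase c, g c u :=
        Finset.sum_le_sum fun u hu => hTg c hc u (Finset.ne_of_mem_erase hu)
    _ = Bv := hsumg c hc
  refine ⟨hge, ?_, ?_⟩
  · -- forward: equality → structure
    intro hEq
    have hTsum : ∑ u ∈ Finset.univ.erase c, Tl c u = Bv := by
      have h1 := hSOge c hc
      have h2 := Finset.sum_le_sum (s := Finset.univ.erase c) (f := g c) (g := Tl c)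
        (fun u hu => hTg c hc u (Finset.ne_of_mem_erase hu))
      rw [hsumg c hc] at h2
      rw [hEq] at h1
      linarith
    have hTeq : ∀ u ∈ Finset.univ.erase c, Tl c u = g c u := by
      by_contra hcon
      push_neg at hcon
      obtain ⟨u, hu, hne'⟩ := hcon
      have hlt : g c u < Tl c u :=
        lt_of_le_of_ne (hTg c hc u (Finset.ne_of_mem_erase hu)) (Ne.symm hne')
      have hss := Finset.sum_lt_sum
        (fun i hi => hTg c hc i (Finset.ne_of_mem_erase hi)) ⟨u, hu, hlt⟩
      rw [hTsum, hsumg c hc] at hss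
      exact lt_irrefl _ hss
    have hstep : ∀ u, u ≠ c → (U.Adj c u → deg U u ≤ 2) ∧ (¬U.Adj c u → deg U u = 1) := by
      intro u hu
      have hTe := hTeq u (Finset.mem_erase.2 ⟨hu, Finset.mem_univ u⟩)
      simp only [hTl, hg] at hTe
      constructor
      · intro h
        by_contra h3
        have h3' : 3 ≤ deg U u := by omega
        rw [if_pos h, if_pos h] at hTe
        have hme : edeg U c u + 1 = deg U u := em_adj U c (h.symm)
        have hcast : (edeg U c u : ℝ) = (deg U u : ℝ) - 1 := by
          have := congrArg (Nat.cast : ℕ → ℝ) hme; push_cast at this; linarith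
        rw [hcast] at hTe
        have := vertexN_strict Δ (deg U u) (by omega) h3'
        linarith
      · intro h
        by_contra h1'
        have h2' : 2 ≤ deg U u := by have := hdeg1 u; omega
        rw [if_neg h, if_neg h] at hTe
        have hme : edeg U c u = deg U u := em_nadj U c (fun hh => h hh.symm)
        rw [hme, zero_add] at hTe
        have := vertexO_strict Δ (deg U u) hΔ4 h2'
        linarith
    -- existence of an edge inside the neighborhood of c
    have hNN : ∃ a b, U.Adj c a ∧ U.Adj c b ∧ U.Adj a b := by
      by_contra hcon
      push_neg at hcon
      have hdc := sum_edeg U c hhs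
      rw [hc, hn] at hdc
      have hpt : ∀ u ∈ Finset.univ.erase c, ∀ v ∈ Finset.univ.erase c,
          (if U.Adj u v then (1:ℕ) else 0)
          ≤ (if ¬U.Adj c u ∧ U.Adj u v then 1 else 0)
            + (if ¬U.Adj c v ∧ U.Adj u v then 1 else 0) := by
        intro u _ v _
        by_cases h : U.Adj u v
        · by_cases h1 : U.Adj c u
          · have h2 : ¬ U.Adj c v := fun h2 => hcon u v h1 h2 h
            simp [h, h1, h2]
          · simp [h, h1]
        · simp [h]
      have hsum1 : ∀ w : V → V → Prop, True := fun _ => trivial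
      -- S1
      have hS1 : ∑ u ∈ Finset.univ.erase c, ∑ v ∈ Finset.univ.erase c,
          (if ¬U.Adj c u ∧ U.Adj u v then (1:ℕ) else 0)
          = ∑ u ∈ (Finset.univ.erase c).filter (fun u => ¬ U.Adj c u), edeg U c u := by
        rw [Finset.sum_filter]
        refine Finset.sum_congr rfl fun u hu => ?_
        by_cases hcu : U.Adj c u
        · simp [hcu]
        · simp [hcu, edeg_eq_sum U c u]
      have hS1val : ∑ u ∈ (Finset.univ.erase c).filter (fun u => ¬ U.Adj c u), edeg U c u
          = ((Finset.univ.erase c).filter (fun u => ¬ U.Adj c u)).card := by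
        rw [Finset.card_eq_sum_ones]
        refine Finset.sum_congr rfl fun u hu => ?_
        obtain ⟨hu1, hu2⟩ := Finset.mem_filter.1 hu
        have hu3 : u ≠ c := Finset.ne_of_mem_erase hu1
        rw [em_nadj U c (fun hh => hu2 hh.symm)]
        exact (hstep u hu3).2 hu2
      have hS2 : ∑ u ∈ Finset.univ.erase c, ∑ v ∈ Finset.univ.erase c,
          (if ¬U.Adj c v ∧ U.Adj u v then (1:ℕ) else 0)
          = ∑ u ∈ Finset.univ.erase c, ∑ v ∈ Finset.univ.erase c,
          (if ¬U.Adj c u ∧ U.Adj u v then (1:ℕ) else 0) := by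
        rw [Finset.sum_comm]
        refine Finset.sum_congr rfl fun u _ => Finset.sum_congr rfl fun v _ => ?_
        rw [U.adj_comm v u]
      have hcards := card_filter_nadj U c
      rw [hc, hn] at hcards
      have htot : ∑ u ∈ Finset.univ.erase c, edeg U c u
          ≤ 2 * ((Finset.univ.erase c).filter (fun u => ¬ U.Adj c u)).card := by
        calc ∑ u ∈ Finset.univ.erase c, edeg U c u
            = ∑ u ∈ Finset.univ.erase c, ∑ v ∈ Finset.univ.erase c,
              (if U.Adj u v then (1:ℕ) else 0) :=
              Finset.sum_congr rfl fun u _ => edeg_eq_sum U c u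
          _ ≤ ∑ u ∈ Finset.univ.erase c, ∑ v ∈ Finset.univ.erase c,
              ((if ¬U.Adj c u ∧ U.Adj u v then (1:ℕ) else 0)
               + (if ¬U.Adj c v ∧ U.Adj u v then (1:ℕ) else 0)) :=
              Finset.sum_le_sum fun u hu => Finset.sum_le_sum fun v hv => hpt u hu v hv
          _ = 2 * ((Finset.univ.erase c).filter (fun u => ¬ U.Adj c u)).card := by
              simp only [Finset.sum_add_distrib]
              rw [hS2, hS1, hS1val]
              ring
      omega
    obtain ⟨a, b, hca, hcb, hab⟩ := hNN
    have hdist2 : ∀ v, U.dist c v ≤ 2 := by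
      intro v
      by_cases hvc : v = c
      · subst hvc; simp [SimpleGraph.dist_self]
      by_cases hadj : U.Adj c v
      · have h1 : U.dist c v = 1 := SimpleGraph.dist_eq_one_iff_adj.2 hadj
        omega
      · have hdv : deg U v = 1 := (hstep v hvc).2 (fun h => hadj h)
        obtain ⟨x, hx⟩ := exists_adj hconn h2card v
        have hxc : x ≠ c := by rintro rfl; exact hadj hx.symm
        have hAcx : U.Adj c x := by
          by_contra hncx
          have hdx : deg U x = 1 := (hstep x hxc).2 hncx
          exact hnoleaf c hc v x hx ⟨hdv, hdx⟩
        have hp := SimpleGraph.dist_le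
          (SimpleGraph.Walk.cons hAcx (SimpleGraph.Walk.cons hx.symm SimpleGraph.Walk.nil))
        simpa using hp
    refine ⟨c, a, b, hc, ?_, hca, hcb, hab, hdist2⟩
    intro v hv
    by_cases hadj : U.Adj c v
    · exact (hstep v hv).1 hadj
    · rw [(hstep v hv).2 hadj]; omega
  · -- backward: structure → equality
    rintro ⟨c₀, a, b, hdegc, hle2, hca, hcb, hab, hdist⟩
    have hmemE' : ∀ u : V, u ≠ c₀ → u ∈ Finset.univ.erase c₀ :=
      fun u hu => Finset.mem_erase.2 ⟨hu, Finset.mem_univ u⟩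
    set E' := Finset.univ.erase c₀ with hE'
    set N := E'.filter (fun u => U.Adj c₀ u) with hN
    set O := E'.filter (fun u => ¬ U.Adj c₀ u) with hO
    have hONnbr : ∀ u ∈ O, ∃ x, U.Adj c₀ x ∧ U.Adj x u := by
      intro u hu
      obtain ⟨hu1, hu2⟩ := Finset.mem_filter.1 hu
      have hune : u ≠ c₀ := Finset.ne_of_mem_erase hu1
      have hdne : U.dist c₀ u ≠ 0 := by
        rw [SimpleGraph.dist_ne_zero_iff_ne_and_reachable]
        exact ⟨Ne.symm hune, hconn c₀ u⟩
      have hd1 : U.dist c₀ u ≠ 1 := fun h => hu2 (SimpleGraph.dist_eq_one_iff_adj.1 h)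
      have hd2 : U.dist c₀ u = 2 := by have := hdist u; omega
      obtain ⟨p, hp⟩ := (hconn c₀ u).exists_walk_length_eq_dist
      rw [hd2] at hp
      cases p with
      | nil => simp at hp
      | cons h q =>
        cases q with
        | nil => simp at hp
        | cons h' q' =>
          have hq : q'.length = 0 := by
            simp only [SimpleGraph.Walk.length_cons] at hp; omega
          have heq := SimpleGraph.Walk.eq_of_length_eq_zero hq
          exact ⟨_, h, heq ▸ h'⟩
    have hcardO := card_filter_nadj U c₀
    rw [hdegc, hn, ← hE', ← hO] at hcardO
    have hdc := sum_edeg U c₀ hhs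
    rw [hdegc, hn, ← hE'] at hdc
    have hsplit : ∀ u ∈ E', edeg U c₀ u
        = (∑ v ∈ N, if U.Adj u v then 1 else 0) + (∑ v ∈ O, if U.Adj u v then 1 else 0) := by
      intro u _
      rw [edeg_eq_sum U c₀ u, hN, hO, Finset.sum_filter_add_sum_filter_not]
    have hTsplit : ∑ u ∈ E', edeg U c₀ u =
        ((∑ u ∈ N, ∑ v ∈ N, if U.Adj u v then 1 else 0)
          + (∑ u ∈ O, ∑ v ∈ N, if U.Adj u v then 1 else 0))
        + ((∑ u ∈ N, ∑ v ∈ O, if U.Adj u v then 1 else 0)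
          + (∑ u ∈ O, ∑ v ∈ O, if U.Adj u v then 1 else 0)) := by
      rw [Finset.sum_congr rfl hsplit, Finset.sum_add_distrib]
      rw [← Finset.sum_filter_add_sum_filter_not E' (fun u => U.Adj c₀ u)
        (fun u => ∑ v ∈ N, if U.Adj u v then (1:ℕ) else 0)]
      rw [← Finset.sum_filter_add_sum_filter_not E' (fun u => U.Adj c₀ u)
        (fun u => ∑ v ∈ O, if U.Adj u v then (1:ℕ) else 0)]
    have heNOsym : (∑ u ∈ N, ∑ v ∈ O, if U.Adj u v then (1:ℕ) else 0)
        = (∑ u ∈ O, ∑ v ∈ N, if U.Adj u v then (1:ℕ) else 0) := by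
      rw [Finset.sum_comm]
      exact Finset.sum_congr rfl fun u _ => Finset.sum_congr rfl fun v _ => by rw [U.adj_comm]
    have haN : a ∈ N := Finset.mem_filter.2 ⟨hmemE' a hca.ne', hca⟩
    have hbN : b ∈ N := Finset.mem_filter.2 ⟨hmemE' b hcb.ne', hcb⟩
    have heNN2 : 2 ≤ ∑ u ∈ N, ∑ v ∈ N, (if U.Adj u v then (1:ℕ) else 0) := by
      have hsub : ({a, b} : Finset V) ⊆ N := by
        intro x hx
        rcases Finset.mem_insert.1 hx with rfl | hx
        · exact haN
        · rw [Finset.mem_singleton.1 hx]; exact hbN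
      have hstep1 : (2:ℕ) = ∑ u ∈ ({a, b} : Finset V), ∑ v ∈ ({a, b} : Finset V),
          (if U.Adj u v then (1:ℕ) else 0) := by
        rw [Finset.sum_pair hab.ne]
        rw [Finset.sum_pair hab.ne, Finset.sum_pair hab.ne]
        simp [U.irrefl, hab, hab.symm]
      rw [hstep1]
      calc ∑ u ∈ ({a, b} : Finset V), ∑ v ∈ ({a, b} : Finset V), (if U.Adj u v then (1:ℕ) else 0)
          ≤ ∑ u ∈ ({a, b} : Finset V), ∑ v ∈ N, (if U.Adj u v then (1:ℕ) else 0) :=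
            Finset.sum_le_sum fun u _ => Finset.sum_le_sum_of_subset hsub
        _ ≤ ∑ u ∈ N, ∑ v ∈ N, (if U.Adj u v then (1:ℕ) else 0) :=
            Finset.sum_le_sum_of_subset hsub
    have hONle : ∀ u ∈ O, (1:ℕ) ≤ ∑ v ∈ N, (if U.Adj u v then (1:ℕ) else 0) := by
      intro u hu
      obtain ⟨x, hx1, hx2⟩ := hONnbr u hu
      have hxN : x ∈ N := Finset.mem_filter.2 ⟨hmemE' x hx1.ne', hx1⟩
      have := Finset.single_le_sum (f := fun v => if U.Adj u v then (1:ℕ) else 0)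
        (fun i _ => Nat.zero_le _) hxN
      simpa [hx2.symm] using this
    have heONge : O.card ≤ ∑ u ∈ O, ∑ v ∈ N, (if U.Adj u v then (1:ℕ) else 0) := by
      rw [Finset.card_eq_sum_ones]
      exact Finset.sum_le_sum hONle
    have heOO : ∑ u ∈ O, ∑ v ∈ O, (if U.Adj u v then (1:ℕ) else 0) = 0 := by omega
    have heON : ∑ u ∈ O, ∑ v ∈ N, (if U.Adj u v then (1:ℕ) else 0) = O.card := by omega
    have hOOadj : ∀ u ∈ O, ∀ v ∈ O, ¬ U.Adj u v := by
      intro u hu v hv hadj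
      have h0 := (Finset.sum_eq_zero_iff.1 heOO) u hu
      have h1 := (Finset.sum_eq_zero_iff.1 h0) v hv
      simp [hadj] at h1
    have hON1 : ∀ u ∈ O, (∑ v ∈ N, if U.Adj u v then (1:ℕ) else 0) = 1 := by
      intro u hu
      by_contra hne1
      have hlt := Finset.sum_lt_sum hONle
        ⟨u, hu, lt_of_le_of_ne (hONle u hu) (fun h => hne1 h.symm)⟩
      rw [heON] at hlt
      rw [← Finset.card_eq_sum_ones] at hlt
      exact lt_irrefl _ hlt
    have hdegO : ∀ u ∈ O, deg U u = 1 := by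
      intro u hu
      obtain ⟨hu1, hu2⟩ := Finset.mem_filter.1 hu
      have he : edeg U c₀ u = deg U u := em_nadj U c₀ (fun hh => hu2 hh.symm)
      rw [← he, hsplit u hu1, hON1 u hu]
      have hz : ∑ v ∈ O, (if U.Adj u v then (1:ℕ) else 0) = 0 :=
        Finset.sum_eq_zero fun v hv => by simp [hOOadj u hu v hv]
      rw [hz]
    have hdeg2 : ∀ u, U.Adj c₀ u → ∀ x, U.Adj u x → x ≠ c₀ → deg U u = 2 := by
      intro u h1 x h2 h3
      have hle : deg U u ≤ 2 := hle2 u h1.ne'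
      have hge : 2 ≤ deg U u := by
        rw [deg]
        have hsub : ({c₀, x} : Finset V) ⊆ Finset.univ.filter (fun v => U.Adj u v) := by
          intro y hy
          rcases Finset.mem_insert.1 hy with rfl | hy
          · simp [h1.symm]
          · rw [Finset.mem_singleton.1 hy]; simp [h2]
        have hcc := Finset.card_le_card hsub
        rwa [Finset.card_pair (Ne.symm h3)] at hcc
      omega
    have hedge : ∀ u ∈ E', ∀ v ∈ E', U.Adj u v →
        √((deg U u:ℝ)^2 + (deg U v:ℝ)^2) = phi (deg U u) + phi (deg U v) := by
      intro u hu v hv hadj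
      have hune : u ≠ c₀ := Finset.ne_of_mem_erase hu
      have hvne : v ≠ c₀ := Finset.ne_of_mem_erase hv
      by_cases h1 : U.Adj c₀ u <;> by_cases h2 : U.Adj c₀ v
      · have hdu : deg U u = 2 := hdeg2 u h1 v hadj hvne
        have hdv : deg U v = 2 := hdeg2 v h2 u hadj.symm hune
        rw [hdu, hdv]
        exact_mod_cast edge_eq22.symm
      · have hvO : v ∈ O := Finset.mem_filter.2 ⟨hv, h2⟩
        have hdv : deg U v = 1 := hdegO v hvO
        have hdu : deg U u = 2 := hdeg2 u h1 v hadj hvne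
        rw [hdu, hdv]
        have h12 := edge_eq12
        rw [show (1:ℝ)^2 + (2:ℝ)^2 = (2:ℝ)^2 + (1:ℝ)^2 by ring, add_comm (phi 1)] at h12
        exact_mod_cast h12.symm
      · have huO : u ∈ O := Finset.mem_filter.2 ⟨hu, h1⟩
        have hdu : deg U u = 1 := hdegO u huO
        have hdv : deg U v = 2 := hdeg2 v h2 u hadj.symm hune
        rw [hdu, hdv]
        exact_mod_cast edge_eq12.symm
      · exact absurd hadj (hOOadj u (Finset.mem_filter.2 ⟨hu, h1⟩) v (Finset.mem_filter.2 ⟨hv, h2⟩))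
    have hQeq : ∑ u ∈ E', ∑ v ∈ E',
        (if U.Adj u v then √((deg U u:ℝ)^2+(deg U v:ℝ)^2) else 0)
        = 2 * ∑ u ∈ E', (edeg U c₀ u:ℝ) * phi (deg U u) := by
      rw [← Q_phi U c₀ phi]
      refine Finset.sum_congr rfl fun u hu => Finset.sum_congr rfl fun v hv => ?_
      by_cases h : U.Adj u v
      · rw [if_pos h, if_pos h, hedge u hu v hv h]
      · rw [if_neg h, if_neg h]
    have hTleq : ∀ u ∈ E', Tl c₀ u = g c₀ u := by
      intro u hu
      have hune : u ≠ c₀ := Finset.ne_of_mem_erase hu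
      simp only [hTl, hg]
      by_cases h : U.Adj c₀ u
      · rw [if_pos h, if_pos h]
        have hd12 : deg U u = 1 ∨ deg U u = 2 := by
          have := hle2 u hune; have := hdeg1 u; omega
        have hme : edeg U c₀ u + 1 = deg U u := em_adj U c₀ h.symm
        rcases hd12 with hd | hd
        · have h0 : edeg U c₀ u = 0 := by omega
          rw [hd, h0]
          norm_num
        · have h1 : edeg U c₀ u = 1 := by omega
          rw [hd, h1, phi, if_neg (by norm_num), lam]
          push_cast
          ring_nf
      · rw [if_neg h, if_neg h]
        have huO : u ∈ O := Finset.mem_filter.2 ⟨hu, h⟩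
        have hd : deg U u = 1 := hdegO u huO
        rw [em_nadj U c₀ (fun hh => h hh.symm), hd, phi, if_pos rfl]
        push_cast
        ring
    rw [SO_decomp U c₀, hdegc, hQeq]
    have hfin : (∑ v ∈ E', if U.Adj c₀ v then √((Δ:ℝ)^2 + (deg U v:ℝ)^2) else 0)
        + (1/2) * (2 * ∑ u ∈ E', (edeg U c₀ u:ℝ) * phi (deg U u))
        = ∑ u ∈ E', Tl c₀ u := by
      simp only [hTl]
      rw [Finset.sum_add_distrib]
      ring
    rw [hfin, Finset.sum_congr rfl hTleq, hsumg c₀ hdegc]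
end
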